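/- arXiv:1101.2184 — 8 statements merged into one kernel-verified Lean document; each statement's English description precedes it below -/
import Mathlib

section
/- Let σ ⊂ ℝ^N be an n-simplex, let 𝒜 ⊂ σ be compact, and let z be a point of the simplicial interior of σ with z ∉ 𝒜. Then the cone 𝒞 = {αx + (1−α)z ∈ σ : x ∈ 𝒜, α ≥ 0} is compact and contains 𝒜 and z. -/
/-!
A point `α • x + (1 - α) • z` of the cone lies at distance `α · dist x z` from `z`. Since `z` has
positive distance `d` from the closed set `𝒜` and the simplex lies in a ball of radius `R` around
`z`, the coefficient satisfies `α ≤ R / d`. Hence the cone is the intersection of the closed simplex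
with the continuous image of the compact set `𝒜 × [0, R / d]`, and so it is compact.
-/

/-- The simplicial interior of the simplex spanned by `v 0, …, v n`:
points all of whose barycentric coordinates are strictly positive. -/
def simplexInterior {E : Type*} [AddCommGroup E] [Module ℝ E] {n : ℕ}
    (v : Fin (n + 1) → E) : Set E :=
  {y | ∃ β : Fin (n + 1) → ℝ, (∀ i, 0 < β i) ∧ (∑ i, β i) = 1 ∧ y = ∑ i, β i • v i}

/-- The cone `𝒞 = {αx + (1−α)z ∈ σ : x ∈ 𝒜, α ≥ 0}`. -/
def simplexCone {E : Type*} [AddCommGroup E] [Module ℝ E]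
    (σ 𝒜 : Set E) (z : E) : Set E :=
  {y ∈ σ | ∃ x ∈ 𝒜, ∃ α : ℝ, 0 ≤ α ∧ y = α • x + (1 - α) • z}

section SimplexCone

variable {E : Type*}

lemma simplexInterior_subset_convexHull [AddCommGroup E] [Module ℝ E] {n : ℕ}
    (v : Fin (n + 1) → E) : simplexInterior v ⊆ convexHull ℝ (Set.range v) := by
  rintro _ ⟨β, hβpos, hβsum, rfl⟩
  exact (convex_convexHull ℝ _).sum_mem (fun i _ => (hβpos i).le) hβsum
    (fun i _ => subset_convexHull ℝ _ ⟨i, rfl⟩)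

lemma subset_simplexCone [AddCommGroup E] [Module ℝ E] {σ 𝒜 : Set E} (z : E) (h : 𝒜 ⊆ σ) :
    𝒜 ⊆ simplexCone σ 𝒜 z :=
  fun x hx => ⟨h hx, x, hx, 1, zero_le_one, by simp⟩

lemma apex_mem_simplexCone [AddCommGroup E] [Module ℝ E] {σ 𝒜 : Set E} {z : E} (hz : z ∈ σ)
    (h𝒜 : 𝒜.Nonempty) : z ∈ simplexCone σ 𝒜 z :=
  let ⟨x, hx⟩ := h𝒜
  ⟨hz, x, hx, 0, le_rfl, by simp⟩

variable [NormedAddCommGroup E] [NormedSpace ℝ E]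

lemma dist_smul_add_one_sub_smul_left (x z : E) (α : ℝ) :
    dist (α • x + (1 - α) • z) z = |α| * dist x z := by
  have h := dist_lineMap_left z x α
  rwa [AffineMap.lineMap_apply_module, add_comm, Real.norm_eq_abs, dist_comm z] at h

lemma simplexCone_eq_inter_image {σ 𝒜 : Set E} {z : E} {R d : ℝ}
    (hσ : σ ⊆ Metric.closedBall z R) (hd : 0 < d) (h𝒜 : ∀ x ∈ 𝒜, d ≤ dist x z) :
    simplexCone σ 𝒜 z =
      σ ∩ (fun p : E × ℝ => p.2 • p.1 + (1 - p.2) • z) '' (𝒜 ×ˢ Set.Icc 0 (R / d)) := by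
  ext y
  constructor
  · rintro ⟨hyσ, x, hx, α, hα, rfl⟩
    refine ⟨hyσ, (x, α), ⟨hx, hα, ?_⟩, rfl⟩
    rw [le_div_iff₀ hd]
    calc α * d ≤ α * dist x z := mul_le_mul_of_nonneg_left (h𝒜 x hx) hα
      _ = dist (α • x + (1 - α) • z) z := by
        rw [dist_smul_add_one_sub_smul_left, abs_of_nonneg hα]
      _ ≤ R := hσ hyσ
  · rintro ⟨hyσ, ⟨x, α⟩, ⟨hx, hα, -⟩, rfl⟩
    exact ⟨hyσ, x, hx, α, hα, rfl⟩

theorem isCompact_simplexCone {σ 𝒜 : Set E} {z : E} (hσc : IsClosed σ)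
    (hσb : Bornology.IsBounded σ) (h𝒜 : IsCompact 𝒜) (hz : z ∉ 𝒜) :
    IsCompact (simplexCone σ 𝒜 z) := by
  obtain ⟨R, hR⟩ := hσb.subset_closedBall z
  obtain ⟨d, hd, hball⟩ := Metric.isOpen_iff.mp h𝒜.isClosed.isOpen_compl z hz
  have h𝒜d : ∀ x ∈ 𝒜, d ≤ dist x z := fun x hx => not_lt.mp fun h => hball h hx
  rw [simplexCone_eq_inter_image hR hd h𝒜d]
  exact ((h𝒜.prod isCompact_Icc).image (by fun_prop)).inter_left hσc

end SimplexCone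

theorem stmt_5_general {N n : ℕ} (v : Fin (n + 1) → EuclideanSpace ℝ (Fin N))
    (𝒜 : Set (EuclideanSpace ℝ (Fin N)))
    (h𝒜σ : 𝒜 ⊆ convexHull ℝ (Set.range v)) (h𝒜c : IsCompact 𝒜) (h𝒜ne : 𝒜.Nonempty)
    (z : EuclideanSpace ℝ (Fin N)) (hz : z ∈ simplexInterior v) (hz𝒜 : z ∉ 𝒜) :
    IsCompact (simplexCone (convexHull ℝ (Set.range v)) 𝒜 z) ∧
    𝒜 ⊆ simplexCone (convexHull ℝ (Set.range v)) 𝒜 z ∧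
    z ∈ simplexCone (convexHull ℝ (Set.range v)) 𝒜 z := by
  have hσ : IsCompact (convexHull ℝ (Set.range v)) := (Set.finite_range v).isCompact_convexHull ℝ
  exact ⟨isCompact_simplexCone hσ.isClosed hσ.isBounded h𝒜c hz𝒜,
    subset_simplexCone z h𝒜σ,
    apex_mem_simplexCone (simplexInterior_subset_convexHull v hz) h𝒜ne⟩

/-- for an `n`-simplex `σ ⊂ ℝ^N`, a nonempty compact `𝒜 ⊆ σ`, and a point
`z` of the simplicial interior of `σ` with `z ∉ 𝒜`, the cone
`𝒞 = {αx + (1−α)z ∈ σ : x ∈ 𝒜, α ≥ 0}` is compact and contains `𝒜` and `z`. -/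
theorem stmt_5 {N n : ℕ} (v : Fin (n + 1) → EuclideanSpace ℝ (Fin N))
    (hv : AffineIndependent ℝ v)
    (𝒜 : Set (EuclideanSpace ℝ (Fin N)))
    (h𝒜σ : 𝒜 ⊆ convexHull ℝ (Set.range v)) (h𝒜c : IsCompact 𝒜) (h𝒜ne : 𝒜.Nonempty)
    (z : EuclideanSpace ℝ (Fin N)) (hz : z ∈ simplexInterior v) (hz𝒜 : z ∉ 𝒜) :
    IsCompact (simplexCone (convexHull ℝ (Set.range v)) 𝒜 z) ∧
    𝒜 ⊆ simplexCone (convexHull ℝ (Set.range v)) 𝒜 z ∧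
    z ∈ simplexCone (convexHull ℝ (Set.range v)) 𝒜 z :=
  stmt_5_general v 𝒜 h𝒜σ h𝒜c h𝒜ne z hz hz𝒜
end

section
/- Let σ ⊂ ℝ^N be an n-simplex with simplicial interior Int σ and boundary Bd σ, let 𝒜 ⊂ σ be compact, let z ∈ Int σ with z ∉ 𝒜, and let 𝒞 = {αx+(1−α)z ∈ σ : x ∈ 𝒜, α ≥ 0}. For x ∈ σ∖{z}, let h̄(x) denote the unique point of Bd σ on the ray from z through x. Then 𝒞 ∩ Bd σ = h̄(𝒜). -/
/-!
A point `p = α • x + (1 - α) • z` of the cone lies on the boundary only if `α ≥ 1`: for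
`0 ≤ α < 1` it is a combination of `x ∈ σ` and `z ∈ Int σ` with positive weight on `z`, and
such combinations have all barycentric coordinates positive. Then `b = α⁻¹ ∈ (0, 1]` exhibits
`p` as `h̄(x)`. Conversely, `b • p + (1 - b) • z = x` inverts to `p = b⁻¹ • x + (1 - b⁻¹) • z`.
-/

lemma inv_smul_smul_add_one_sub_smul {𝕜 E : Type*} [Field 𝕜] [AddCommGroup E] [Module 𝕜 E]
    {a : 𝕜} (ha : a ≠ 0) (x z : E) :
    a⁻¹ • (a • x + (1 - a) • z) + (1 - a⁻¹) • z = x := by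
  have h := AffineMap.lineMap_lineMap_right (k := 𝕜) z x a a⁻¹
  rw [inv_mul_cancel₀ ha, AffineMap.lineMap_apply_one] at h
  simpa only [AffineMap.lineMap_apply_module, add_comm] using h

lemma exists_weights_of_mem_convexHull_range {ι E : Type*} [Fintype ι] [AddCommGroup E]
    [Module ℝ E] {v : ι → E} {w : E} (hw : w ∈ convexHull ℝ (Set.range v)) :
    ∃ γ : ι → ℝ, (∀ i, 0 ≤ γ i) ∧ ∑ i, γ i = 1 ∧ w = ∑ i, γ i • v i := by
  classical
  rw [convexHull_range_eq_exists_affineCombination] at hw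
  obtain ⟨s, γ, hγ0, hγ1, rfl⟩ := hw
  refine ⟨fun i => if i ∈ s then γ i else 0, fun i => ?_, ?_, ?_⟩
  · dsimp only
    split_ifs with hi
    exacts [hγ0 i hi, le_rfl]
  · rw [Finset.sum_ite_mem, Finset.univ_inter, hγ1]
  · simp_rw [s.affineCombination_eq_linear_combination v γ hγ1, ite_smul, zero_smul]
    rw [Finset.sum_ite_mem, Finset.univ_inter]

lemma smul_add_one_sub_smul_mem_simplexInterior {E : Type*} [AddCommGroup E] [Module ℝ E]
    {n : ℕ} {v : Fin (n + 1) → E} {z w : E} (hz : z ∈ simplexInterior v)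
    (hw : w ∈ convexHull ℝ (Set.range v)) {t : ℝ} (ht0 : 0 ≤ t) (ht1 : t < 1) :
    t • w + (1 - t) • z ∈ simplexInterior v := by
  obtain ⟨β, hβ0, hβ1, rfl⟩ := hz
  obtain ⟨γ, hγ0, hγ1, rfl⟩ := exists_weights_of_mem_convexHull_range hw
  refine ⟨fun i => t * γ i + (1 - t) * β i, fun i => ?_, ?_, ?_⟩
  · exact add_pos_of_nonneg_of_pos (mul_nonneg ht0 (hγ0 i)) (mul_pos (sub_pos.2 ht1) (hβ0 i))
  · rw [Finset.sum_add_distrib, ← Finset.mul_sum, ← Finset.mul_sum, hβ1, hγ1]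
    ring
  · simp only [Finset.smul_sum, ← Finset.sum_add_distrib, add_smul, smul_smul]

/-- `h̄(x)` is encoded as the point `p ∈ Bd σ = σ ∖ Int σ` with `b • p + (1 - b) • z = x`
for some `b ∈ (0, 1]`. -/
theorem stmt_6_general {N n : ℕ} (v : Fin (n + 1) → EuclideanSpace ℝ (Fin N))
    (𝒜 : Set (EuclideanSpace ℝ (Fin N)))
    (h𝒜σ : 𝒜 ⊆ convexHull ℝ (Set.range v))
    (z : EuclideanSpace ℝ (Fin N)) (hz : z ∈ simplexInterior v) :
    simplexCone (convexHull ℝ (Set.range v)) 𝒜 z ∩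
        (convexHull ℝ (Set.range v) \ simplexInterior v) =
      {p ∈ convexHull ℝ (Set.range v) \ simplexInterior v |
        ∃ x ∈ 𝒜, ∃ b : ℝ, 0 < b ∧ b ≤ 1 ∧ b • p + (1 - b) • z = x} := by
  ext p
  simp only [simplexCone, Set.mem_inter_iff, Set.mem_ofPred_eq]
  constructor
  · rintro ⟨⟨-, x, hx, α, hα0, rfl⟩, hpBd⟩
    have hα1 : 1 ≤ α := not_lt.1 fun hα1 =>
      hpBd.2 (smul_add_one_sub_smul_mem_simplexInterior hz (h𝒜σ hx) hα0 hα1)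
    exact ⟨hpBd, x, hx, α⁻¹, by positivity, inv_le_one_of_one_le₀ hα1,
      inv_smul_smul_add_one_sub_smul (by positivity) x z⟩
  · rintro ⟨hpBd, x, hx, b, hb0, -, rfl⟩
    exact ⟨⟨hpBd.1, _, hx, b⁻¹, inv_nonneg.2 hb0.le,
      (inv_smul_smul_add_one_sub_smul hb0.ne' p z).symm⟩, hpBd⟩

/-- `𝒞 ∩ Bd σ = h̄(𝒜)`, where `h̄(x)` is the (unique) point `p` of `Bd σ`
with `b·p + (1−b)·z = x` for some `b ∈ (0,1]`. Here `Bd σ = σ ∖ Int σ`. -/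
theorem stmt_6 {N n : ℕ} (v : Fin (n + 1) → EuclideanSpace ℝ (Fin N))
    (hv : AffineIndependent ℝ v)
    (𝒜 : Set (EuclideanSpace ℝ (Fin N)))
    (h𝒜σ : 𝒜 ⊆ convexHull ℝ (Set.range v)) (h𝒜c : IsCompact 𝒜)
    (z : EuclideanSpace ℝ (Fin N)) (hz : z ∈ simplexInterior v) (hz𝒜 : z ∉ 𝒜) :
    simplexCone (convexHull ℝ (Set.range v)) 𝒜 z ∩
        (convexHull ℝ (Set.range v) \ simplexInterior v) =
      {p ∈ convexHull ℝ (Set.range v) \ simplexInterior v |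
        ∃ x ∈ 𝒜, ∃ b : ℝ, 0 < b ∧ b ≤ 1 ∧ b • p + (1 - b) • z = x} :=
  stmt_6_general v 𝒜 h𝒜σ z hz
end

section
/- Let σ be an n-simplex in ℝ^N and let z ∈ Int σ. For y ∈ σ, define b(y) ∈ [0,1] by the relation y = b(y)·h̄(y) + (1−b(y))·z where h̄(y) ∈ Bd σ (with b(z) = 0). Then the function b : σ → [0,1] is Lipschitz. -/
/-!
Write points of `σ` in barycentric coordinates with respect to its vertices; these coordinates
depend Lipschitz-continuously on the point because the vertices are affinely independent.
If `β` are the (positive) coordinates of `z` and `h` lies on a face of `σ`, say with `j`-th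
coordinate `0`, then the `j`-th coordinate of `y = b • h + (1 - b) • z` is `(1 - b) β j`,
while for an arbitrary `h` it is at least that. Hence `(b₂ - b₁) β j` is bounded by the
change of one barycentric coordinate between `y₁` and `y₂`, so by a multiple of `‖y₂ - y₁‖`.
-/

open Finset

section Barycentric

variable {ι E : Type*} [Fintype ι]

theorem exists_mem_stdSimplex_of_mem_convexHull_range [AddCommGroup E] [Module ℝ E]
    {v : ι → E} {x : E} (hx : x ∈ convexHull ℝ (Set.range v)) :
    ∃ w ∈ stdSimplex ℝ ι, Fintype.linearCombination ℝ v w = x := by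
  classical
  refine convexHull_min ?_ ((convex_stdSimplex ℝ ι).linear_image _) hx
  rintro _ ⟨i, rfl⟩
  exact ⟨Pi.single i 1, single_mem_stdSimplex ℝ i, by simp⟩

theorem exists_mem_stdSimplex_eq_zero_of_mem_convexHull_diff_simplexInterior
    [AddCommGroup E] [Module ℝ E] {n : ℕ} {v : Fin (n + 1) → E} {x : E}
    (hx : x ∈ convexHull ℝ (Set.range v) \ simplexInterior v) :
    ∃ w ∈ stdSimplex ℝ (Fin (n + 1)), Fintype.linearCombination ℝ v w = x ∧ ∃ j, w j = 0 := by
  obtain ⟨w, hw, rfl⟩ := exists_mem_stdSimplex_of_mem_convexHull_range hx.1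
  refine ⟨w, hw, rfl, ?_⟩
  by_contra! hpos
  exact hx.2 ⟨w, fun i ↦ (hw.1 i).lt_of_ne' (hpos i), hw.2, Fintype.linearCombination_apply ℝ v w⟩

variable [NormedAddCommGroup E] [NormedSpace ℝ E]

theorem AffineIndependent.exists_abs_le_mul_norm_linearCombination {v : ι → E}
    (hv : AffineIndependent ℝ v) :
    ∃ K, 0 ≤ K ∧ ∀ c : ι → ℝ, ∑ i, c i = 0 →
      ∀ j, |c j| ≤ K * ‖Fintype.linearCombination ℝ v c‖ := by
  let T : (ι → ℝ) →ₗ[ℝ] E × ℝ :=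
    (Fintype.linearCombination ℝ v).prod (Fintype.linearCombination ℝ fun _ ↦ (1 : ℝ))
  have hT : ∀ c, T c = (Fintype.linearCombination ℝ v c, ∑ i, c i) := fun c ↦ by
    simp [T, Fintype.linearCombination_apply]
  have hker : LinearMap.ker T = ⊥ := by
    refine LinearMap.ker_eq_bot'.2 fun c hc ↦ funext fun j ↦ ?_
    rw [hT, Prod.mk_eq_zero, Fintype.linearCombination_apply] at hc
    exact affineIndependent_iff.1 hv univ c hc.2 hc.1 j (mem_univ j)
  obtain ⟨K, -, hK⟩ := T.exists_antilipschitzWith hker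
  refine ⟨K, K.coe_nonneg, fun c hc j ↦ ?_⟩
  calc |c j| ≤ ‖c‖ := by simpa only [Real.norm_eq_abs] using norm_le_pi_norm c j
    _ ≤ K * ‖T c‖ := hK.le_mul_norm (map_zero T) c
    _ = K * ‖Fintype.linearCombination ℝ v c‖ := by simp [hT, Prod.norm_def, hc]

theorem sub_mul_le_mul_norm_of_weight_eq_zero {v : ι → E} {K : ℝ}
    (hK : ∀ c : ι → ℝ, ∑ i, c i = 0 → ∀ j, |c j| ≤ K * ‖Fintype.linearCombination ℝ v c‖)
    {β γ₁ γ₂ : ι → ℝ} (hβ : ∑ i, β i = 1) (hγ₁ : γ₁ ∈ stdSimplex ℝ ι) (hγ₂ : ∑ i, γ₂ i = 1)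
    {j : ι} (hj : γ₂ j = 0) {b₁ : ℝ} (hb₁ : 0 ≤ b₁) (b₂ : ℝ) :
    (b₂ - b₁) * β j ≤ K * ‖Fintype.linearCombination ℝ v (b₂ • γ₂ + (1 - b₂) • β) -
      Fintype.linearCombination ℝ v (b₁ • γ₁ + (1 - b₁) • β)‖ := by
  set c := (b₂ • γ₂ + (1 - b₂) • β) - (b₁ • γ₁ + (1 - b₁) • β)
  have hc : ∑ i, c i = 0 := by
    simp only [c, Pi.sub_apply, Pi.add_apply, Pi.smul_apply, smul_eq_mul, sum_sub_distrib,
      sum_add_distrib, ← mul_sum, hβ, hγ₂, hγ₁.2]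
    ring
  calc (b₂ - b₁) * β j ≤ -c j := by
        simp only [c, Pi.sub_apply, Pi.add_apply, Pi.smul_apply, smul_eq_mul, hj]
        nlinarith [mul_nonneg hb₁ (hγ₁.1 j)]
    _ ≤ |c j| := neg_le_abs _
    _ ≤ _ := by simpa only [c, map_sub] using hK c hc j

end Barycentric

section Lipschitz

variable {n : ℕ} {E : Type*} [NormedAddCommGroup E] [NormedSpace ℝ E]
  {v : Fin (n + 1) → E} {K : ℝ}

theorem sub_le_mul_norm_sub_of_mem_convexHull_diff_simplexInterior (hK0 : 0 ≤ K)
    (hK : ∀ c : Fin (n + 1) → ℝ, ∑ i, c i = 0 →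
      ∀ j, |c j| ≤ K * ‖Fintype.linearCombination ℝ v c‖)
    {β : Fin (n + 1) → ℝ} (hβ : ∀ i, 0 < β i) (hβ1 : ∑ i, β i = 1) {z : E}
    (hz : Fintype.linearCombination ℝ v β = z) {h₁ h₂ : E}
    (hh₁ : h₁ ∈ convexHull ℝ (Set.range v))
    (hh₂ : h₂ ∈ convexHull ℝ (Set.range v) \ simplexInterior v) {b₁ : ℝ} (hb₁ : 0 ≤ b₁)
    (b₂ : ℝ) :
    b₂ - b₁ ≤ K * (∑ i, (β i)⁻¹) * ‖(b₂ • h₂ + (1 - b₂) • z) - (b₁ • h₁ + (1 - b₁) • z)‖ := by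
  obtain ⟨γ₁, hγ₁, rfl⟩ := exists_mem_stdSimplex_of_mem_convexHull_range hh₁
  obtain ⟨γ₂, hγ₂, rfl, j, hj⟩ :=
    exists_mem_stdSimplex_eq_zero_of_mem_convexHull_diff_simplexInterior hh₂
  subst hz
  have key := sub_mul_le_mul_norm_of_weight_eq_zero hK hβ1 hγ₁ hγ₂.2 hj hb₁ b₂
  simp only [map_add, map_smul] at key
  have hβj : (β j)⁻¹ ≤ ∑ i, (β i)⁻¹ :=
    single_le_sum (fun i _ ↦ (inv_pos.2 (hβ i)).le) (mem_univ j)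
  refine ((le_div_iff₀ (hβ j)).2 key).trans ?_
  rw [div_eq_mul_inv, mul_right_comm]
  gcongr

end Lipschitz

/-- for an `n`-simplex `σ ⊂ ℝ^N` and `z ∈ Int σ`, the function
`b : σ → [0,1]` determined by `y = b(y)·h̄(y) + (1−b(y))·z` with `h̄(y) ∈ Bd σ`
(and `b(z) = 0`) is Lipschitz.  We express this via the defining relation:
any values `b₁, b₂ ∈ [0,1]` satisfying the relation at points `y₁, y₂ ∈ σ`
differ by at most `K·‖y₂ − y₁‖`. -/
theorem stmt_8 {N n : ℕ} (v : Fin (n + 1) → EuclideanSpace ℝ (Fin N))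
    (hv : AffineIndependent ℝ v)
    (z : EuclideanSpace ℝ (Fin N)) (hz : z ∈ simplexInterior v) :
    ∃ K : ℝ, ∀ y₁ ∈ convexHull ℝ (Set.range v), ∀ y₂ ∈ convexHull ℝ (Set.range v),
      ∀ b₁ ∈ Set.Icc (0 : ℝ) 1, ∀ b₂ ∈ Set.Icc (0 : ℝ) 1,
      (∃ h₁ ∈ convexHull ℝ (Set.range v) \ simplexInterior v,
          y₁ = b₁ • h₁ + (1 - b₁) • z) →
      (∃ h₂ ∈ convexHull ℝ (Set.range v) \ simplexInterior v,
          y₂ = b₂ • h₂ + (1 - b₂) • z) →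
      |b₂ - b₁| ≤ K * ‖y₂ - y₁‖ := by
  obtain ⟨β, hβ, hβ1, hβz⟩ := hz
  obtain ⟨K, hK0, hK⟩ := hv.exists_abs_le_mul_norm_linearCombination
  have hz : Fintype.linearCombination ℝ v β = z := by rw [Fintype.linearCombination_apply, hβz]
  refine ⟨K * ∑ i, (β i)⁻¹, ?_⟩
  rintro y₁ - y₂ - b₁ hb₁ b₂ hb₂ ⟨h₁, hh₁, rfl⟩ ⟨h₂, hh₂, rfl⟩
  refine abs_sub_le_iff.2 ⟨?_, ?_⟩
  · exact sub_le_mul_norm_sub_of_mem_convexHull_diff_simplexInterior hK0 hK hβ hβ1 hz hh₁.1 hh₂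
      hb₁.1 b₂
  · rw [norm_sub_rev]
    exact sub_le_mul_norm_sub_of_mem_convexHull_diff_simplexInterior hK0 hK hβ hβ1 hz hh₂.1 hh₁
      hb₂.1 b₁
end

section
/- Let σ be an n-simplex in ℝ^N, z ∈ Int σ, and h̄: σ∖{z} → Bd σ the radial projection from z. Then there exists a constant K < ∞ depending only on σ and z such that for all y₁, y₂ ∈ σ and i ∈ {1,2}: |yᵢ − z| · |h̄(y₂) − h̄(y₁)| ≤ K·|y₂ − y₁|. In particular h̄ is locally Lipschitz on σ∖{z} and Lipschitz on any compact subset of σ not containing z. -/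
set_option maxHeartbeats 1000000

lemma coords_of_mem_convexHull {N n : ℕ} (v : Fin (n + 1) → EuclideanSpace ℝ (Fin N))
    {x : EuclideanSpace ℝ (Fin N)} (hx : x ∈ convexHull ℝ (Set.range v)) :
    ∃ w : Fin (n + 1) → ℝ, (∀ i, 0 ≤ w i) ∧ (∑ i, w i) = 1 ∧ x = ∑ i, w i • v i := by
  rw [convexHull_range_eq_exists_affineCombination] at hx
  obtain ⟨s, w, h0, h1, h2⟩ := hx
  refine ⟨fun i => if i ∈ s then w i else 0, fun i => ?_, ?_, ?_⟩
  · by_cases hi : i ∈ s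
    · simpa [hi] using h0 i hi
    · simp [hi]
  · simpa [Finset.sum_ite_mem] using h1
  · rw [← h2, Finset.affineCombination_eq_linear_combination s v w h1]
    simp [ite_smul, Finset.sum_ite_mem]

lemma coord_bound {N n : ℕ} (v : Fin (n + 1) → EuclideanSpace ℝ (Fin N))
    (hv : AffineIndependent ℝ v) :
    ∃ c : ℝ, 0 < c ∧ ∀ w : Fin (n + 1) → ℝ, (∑ i, w i) = 0 →
      ∀ i, |w i| ≤ c * ‖∑ i, w i • v i‖ := by
  set f : (Fin (n + 1) → ℝ) →ₗ[ℝ] (EuclideanSpace ℝ (Fin N)) × ℝ :=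
    { toFun := fun w => (∑ i, w i • v i, ∑ i, w i)
      map_add' := by
        intro a b
        simp [add_smul, Finset.sum_add_distrib, Prod.ext_iff]
      map_smul' := by
        intro c a
        simp [smul_smul, Finset.smul_sum, Prod.ext_iff, Finset.mul_sum] }
  have hker : LinearMap.ker f = ⊥ := by
    rw [LinearMap.ker_eq_bot]
    intro a b hab
    have hv1 : (∑ i, a i • v i) = ∑ i, b i • v i := congrArg Prod.fst hab
    have hs1 : (∑ i, a i) = ∑ i, b i := congrArg Prod.snd hab
    have hsum : ∑ i, (a i - b i) = 0 := by
      rw [Finset.sum_sub_distrib, hs1]; ring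
    have hvec : ∑ i, (a i - b i) • v i = 0 := by
      simp [sub_smul, Finset.sum_sub_distrib, hv1]
    have h := affineIndependent_iff.1 hv Finset.univ (fun i => a i - b i) hsum hvec
    funext i
    have h2 : a i - b i = 0 := h i (Finset.mem_univ i)
    linarith
  obtain ⟨K, hK, hKa⟩ := f.exists_antilipschitzWith hker
  refine ⟨K, hK, fun w hw i => ?_⟩
  have h1 : ‖w‖ ≤ K * ‖f w‖ := by
    simpa [dist_eq_norm] using hKa.le_mul_dist w 0
  have h2 : ‖f w‖ = ‖∑ i, w i • v i‖ := by
    have : f w = (∑ i, w i • v i, ∑ i, w i) := rfl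
    rw [this, hw, Prod.norm_def]
    simp
  calc |w i| = ‖w i‖ := rfl
    _ ≤ ‖w‖ := norm_le_pi_norm w i
    _ ≤ K * ‖∑ i, w i • v i‖ := by rw [← h2]; exact h1

/-- for an `n`-simplex `σ ⊂ ℝ^N`, `z ∈ Int σ`, and the radial projection
`h̄ : σ∖{z} → Bd σ` from `z`, there is `K < ∞` depending only on `σ` and `z` such that
`|yᵢ − z|·|h̄(y₂) − h̄(y₁)| ≤ K·|y₂ − y₁|` for `i = 1, 2`.  Here `h̄(yᵢ) = hᵢ` is expressed
via the defining relation `yᵢ = bᵢ•hᵢ + (1−bᵢ)•z`, `hᵢ ∈ Bd σ`, `bᵢ ∈ [0,1]`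
(with `h̄(z)` an arbitrary boundary point). -/
theorem stmt_9 {N n : ℕ} (v : Fin (n + 1) → EuclideanSpace ℝ (Fin N))
    (hv : AffineIndependent ℝ v)
    (z : EuclideanSpace ℝ (Fin N)) (hz : z ∈ simplexInterior v) :
    ∃ K : ℝ, ∀ y₁ ∈ convexHull ℝ (Set.range v), ∀ y₂ ∈ convexHull ℝ (Set.range v),
      ∀ h₁ ∈ convexHull ℝ (Set.range v) \ simplexInterior v,
      ∀ h₂ ∈ convexHull ℝ (Set.range v) \ simplexInterior v,
      ∀ b₁ ∈ Set.Icc (0 : ℝ) 1, ∀ b₂ ∈ Set.Icc (0 : ℝ) 1,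
      y₁ = b₁ • h₁ + (1 - b₁) • z →
      y₂ = b₂ • h₂ + (1 - b₂) • z →
      ‖y₁ - z‖ * ‖h₂ - h₁‖ ≤ K * ‖y₂ - y₁‖ ∧
      ‖y₂ - z‖ * ‖h₂ - h₁‖ ≤ K * ‖y₂ - y₁‖ := by
  classical
  obtain ⟨β, hβpos, hβsum, hβz⟩ := hz
  obtain ⟨c, hc, hbound⟩ := coord_bound v hv
  set m : ℝ := Finset.univ.inf' Finset.univ_nonempty β with hm
  have hmpos : 0 < m := by
    rw [hm]
    exact (Finset.lt_inf'_iff _).2 fun i _ => hβpos i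
  set ε : ℝ := m / c with hε
  have hεpos : 0 < ε := div_pos hmpos hc
  -- any affine combination close to z is in the interior
  have hnear : ∀ (δ : Fin (n + 1) → ℝ) (x : EuclideanSpace ℝ (Fin N)),
      (∑ i, δ i) = 1 → x = ∑ i, δ i • v i → ‖x - z‖ < ε → x ∈ simplexInterior v := by
    intro δ x hs hx hlt
    refine ⟨δ, fun i => ?_, hs, hx⟩
    have h1 : ∑ i, (δ i - β i) = 0 := by
      rw [Finset.sum_sub_distrib, hs, hβsum]; ring
    have h2 : ∑ i, (δ i - β i) • v i = x - z := by
      simp [sub_smul, Finset.sum_sub_distrib, ← hx, ← hβz]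
    have h3 := hbound _ h1 i
    rw [h2] at h3
    have h4 : c * ‖x - z‖ < c * ε := by
      exact mul_lt_mul_of_pos_left hlt hc
    have h5 : c * ε = m := by
      rw [hε]; field_simp
    have h6 : |δ i - β i| < m := by
      calc |δ i - β i| ≤ c * ‖x - z‖ := h3
        _ < c * ε := h4
        _ = m := h5
    have h7 : m ≤ β i := Finset.inf'_le β (Finset.mem_univ i)
    have := abs_lt.1 h6
    linarith
  -- bound on the size of the simplex
  set R : ℝ := Finset.univ.sup' Finset.univ_nonempty (fun i => ‖v i - z‖) with hR
  have hRnn : 0 ≤ R := le_trans (norm_nonneg _)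
    (Finset.le_sup' (fun i => ‖v i - z‖) (Finset.mem_univ 0))
  have hRb : ∀ x ∈ convexHull ℝ (Set.range v), ‖x - z‖ ≤ R := by
    intro x hx
    have hsub : convexHull ℝ (Set.range v) ⊆ Metric.closedBall z R := by
      apply convexHull_min _ (convex_closedBall z R)
      rintro x ⟨i, rfl⟩
      simp only [Metric.mem_closedBall, dist_eq_norm]
      exact Finset.le_sup' (fun i => ‖v i - z‖) (Finset.mem_univ i)
    simpa [dist_eq_norm] using hsub hx
  -- Lemma A : the coefficient is Lipschitz
  have hA : ∀ h₁ ∈ convexHull ℝ (Set.range v) \ simplexInterior v,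
      ∀ h₂ ∈ convexHull ℝ (Set.range v) \ simplexInterior v,
      ∀ b₁ ∈ Set.Icc (0:ℝ) 1, ∀ b₂ ∈ Set.Icc (0:ℝ) 1, b₁ ≤ b₂ →
      (b₂ - b₁) * ε ≤ ‖(b₂ • h₂ + (1 - b₂) • z) - (b₁ • h₁ + (1 - b₁) • z)‖ := by
    rintro h₁ ⟨hh₁σ, hh₁i⟩ h₂ ⟨hh₂σ, hh₂i⟩ b₁ ⟨hb₁0, hb₁1⟩ b₂ ⟨hb₂0, hb₂1⟩ hle
    rcases eq_or_lt_of_le hle with heq | hlt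
    · rw [heq]; simp [norm_nonneg]
    · set d : ℝ := b₂ - b₁ with hd
      have hdpos : 0 < d := by rw [hd]; linarith
      set t : ℝ := b₁ / d with ht
      have htnn : 0 ≤ t := div_nonneg hb₁0 hdpos.le
      set q := h₂ + t • (h₂ - h₁) with hq
      have hdt : d • (t • (h₂ - h₁)) = b₁ • (h₂ - h₁) := by
        rw [smul_smul]
        congr 1
        rw [ht]; field_simp
      have hqz : (b₂ • h₂ + (1 - b₂) • z) - (b₁ • h₁ + (1 - b₁) • z) = d • (q - z) := by
        rw [hq, smul_sub, smul_add, hdt, hd]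
        module
      have hεq : ε ≤ ‖q - z‖ := by
        by_contra hcon
        push_neg at hcon
        obtain ⟨α₁, hα₁0, hα₁s, hα₁⟩ := coords_of_mem_convexHull v hh₁σ
        obtain ⟨α₂, hα₂0, hα₂s, hα₂⟩ := coords_of_mem_convexHull v hh₂σ
        have hqc : q = ∑ i, ((1 + t) * α₂ i - t * α₁ i) • v i := by
          have step : q = ∑ i, (α₂ i • v i + t • (α₂ i • v i - α₁ i • v i)) := by
            rw [hq, hα₁, hα₂]
            rw [Finset.sum_add_distrib, ← Finset.smul_sum, Finset.sum_sub_distrib]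
          rw [step]
          refine Finset.sum_congr rfl fun i _ => ?_
          module
        have hqs : ∑ i, ((1 + t) * α₂ i - t * α₁ i) = 1 := by
          rw [Finset.sum_sub_distrib, ← Finset.mul_sum, ← Finset.mul_sum, hα₁s, hα₂s]
          ring
        obtain ⟨γ, hγpos, hγs, hγq⟩ := hnear _ q hqs hqc hcon
        -- h₂ is a convex combination of q (interior) and h₁, with positive weight on q
        apply hh₂i
        have h1t : (0:ℝ) < 1 + t := by linarith
        refine ⟨fun i => (1 / (1 + t)) * γ i + (t / (1 + t)) * α₁ i, fun i => ?_, ?_, ?_⟩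
        · have := hγpos i
          have := hα₁0 i
          positivity
        · simp only [Finset.sum_add_distrib, ← Finset.mul_sum, hγs, hα₁s]
          field_simp
        · have hcomb : h₂ = (1 / (1 + t)) • q + (t / (1 + t)) • h₁ := by
            rw [hq, smul_add, smul_smul]
            have e1 : (1 / (1 + t)) * t = t / (1 + t) := by field_simp
            rw [e1, smul_sub]
            have e2 : (1 / (1 + t)) • h₂ + (t / (1 + t)) • h₂ = h₂ := by
              rw [← add_smul]
              have : 1 / (1 + t) + t / (1 + t) = 1 := by field_simp
              rw [this, one_smul]
            calc h₂ = ((1 / (1 + t)) • h₂ + (t / (1 + t)) • h₂) := e2.symm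
              _ = (1 / (1 + t)) • h₂ + ((t / (1 + t)) • h₂ - (t / (1 + t)) • h₁)
                  + (t / (1 + t)) • h₁ := by abel
          rw [hcomb, hγq, hα₁]
          simp only [Finset.smul_sum, smul_smul, ← Finset.sum_add_distrib, ← add_smul]
      rw [hqz, norm_smul, Real.norm_of_nonneg hdpos.le, hd]
      exact mul_le_mul_of_nonneg_left hεq hdpos.le
  -- the constant
  refine ⟨R * (R / ε + 1), ?_⟩
  intro y₁ hy₁σ y₂ hy₂σ h₁ hh₁ h₂ hh₂ b₁ hb₁ b₂ hb₂ hy1 hy2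
  have habs : |b₂ - b₁| * ε ≤ ‖y₂ - y₁‖ := by
    rcases le_total b₁ b₂ with h | h
    · rw [abs_of_nonneg (by linarith)]
      rw [hy1, hy2]
      exact hA h₁ hh₁ h₂ hh₂ b₁ hb₁ b₂ hb₂ h
    · rw [abs_of_nonpos (by linarith)]
      have := hA h₂ hh₂ h₁ hh₁ b₂ hb₂ b₁ hb₁ h
      rw [← hy1, ← hy2] at this
      rw [← norm_neg]
      simpa [neg_sub] using this
  have hb21 : |b₂ - b₁| ≤ ‖y₂ - y₁‖ / ε := by
    rw [le_div_iff₀ hεpos]; exact habs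
  have hynn : (0:ℝ) ≤ ‖y₂ - y₁‖ := norm_nonneg _
  -- generic estimate
  have key : ∀ (b : ℝ) (hb0 : 0 ≤ b) (h h' : EuclideanSpace ℝ (Fin N)),
      h ∈ convexHull ℝ (Set.range v) → h' ∈ convexHull ℝ (Set.range v) →
      b • (h₂ - h₁) = (b₁ - b₂) • (h' - z) + (y₂ - y₁) →
      b * ‖h - z‖ * ‖h₂ - h₁‖ ≤ R * (R / ε + 1) * ‖y₂ - y₁‖ := by
    intro b hb0 h h' hhσ hh'σ hrel
    have h1 : b * ‖h₂ - h₁‖ = ‖b • (h₂ - h₁)‖ := by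
      rw [norm_smul, Real.norm_of_nonneg hb0]
    have h2 : ‖b • (h₂ - h₁)‖ ≤ |b₁ - b₂| * ‖h' - z‖ + ‖y₂ - y₁‖ := by
      rw [hrel]
      calc ‖(b₁ - b₂) • (h' - z) + (y₂ - y₁)‖
          ≤ ‖(b₁ - b₂) • (h' - z)‖ + ‖y₂ - y₁‖ := norm_add_le _ _
        _ = |b₁ - b₂| * ‖h' - z‖ + ‖y₂ - y₁‖ := by rw [norm_smul, Real.norm_eq_abs]
    have h3 : |b₁ - b₂| * ‖h' - z‖ ≤ (‖y₂ - y₁‖ / ε) * R := by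
      apply mul_le_mul _ (hRb _ hh'σ) (norm_nonneg _) (div_nonneg hynn hεpos.le)
      rw [abs_sub_comm]; exact hb21
    have h4 : b * ‖h₂ - h₁‖ ≤ ‖y₂ - y₁‖ / ε * R + ‖y₂ - y₁‖ := by
      rw [h1]; linarith
    have h5 : ‖h - z‖ ≤ R := hRb _ hhσ
    calc b * ‖h - z‖ * ‖h₂ - h₁‖ = ‖h - z‖ * (b * ‖h₂ - h₁‖) := by ring
      _ ≤ R * (‖y₂ - y₁‖ / ε * R + ‖y₂ - y₁‖) := by
          apply mul_le_mul h5 h4 (by positivity) hRnn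
      _ = R * (R / ε + 1) * ‖y₂ - y₁‖ := by ring
  obtain ⟨hb₁0, hb₁1⟩ := hb₁
  obtain ⟨hb₂0, hb₂1⟩ := hb₂
  have hw1 : y₁ - z = b₁ • (h₁ - z) := by rw [hy1]; module
  have hw2 : y₂ - z = b₂ • (h₂ - z) := by rw [hy2]; module
  have hyy : y₂ - y₁ = b₂ • (h₂ - z) - b₁ • (h₁ - z) := by rw [hy1, hy2]; module
  constructor
  · have : ‖y₁ - z‖ = b₁ * ‖h₁ - z‖ := by
      rw [hw1, norm_smul, Real.norm_of_nonneg hb₁0]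
    rw [this]
    apply key b₁ hb₁0 h₁ h₂ hh₁.1 hh₂.1
    rw [hyy]; module
  · have : ‖y₂ - z‖ = b₂ * ‖h₂ - z‖ := by
      rw [hw2, norm_smul, Real.norm_of_nonneg hb₂0]
    rw [this]
    apply key b₂ hb₂0 h₂ h₁ hh₂.1 hh₁.1
    rw [hyy]; module
end

section
/- Identify ℝ^{n−1} with the hyperplane {y ∈ ℝ^n : y_n = 0}, let σ ⊂ ℝ^n be an n-simplex with an (n−1)-face τ ⊂ ℝ^{n−1}, let z ∈ Int σ (so z_n > 0). For y ∈ ζ(z;τ) define h_{z,τ}(y) = (z_n/(z_n − y_n))·(y − (y_n/z_n)·z). Then for y ∈ ζ(z;τ), the matrix Dh_{z,τ}(y)^T Dh_{z,τ}(y) has largest eigenvalue λ(y;z)² = |z−y|²·z_n²/(z_n − y_n)^4, and λ(y;z) = |z−x|/(z_n − y_n) ≥ z_n/(z_n − y_n), where x = h_{z,τ}(y) ∈ τ. -/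
lemma normsq_eq {m : ℕ} (a : EuclideanSpace ℝ (Fin m)) : ‖a‖ ^ 2 = ∑ i, a i ^ 2 := by
  rw [EuclideanSpace.norm_eq, Real.sq_sqrt (by positivity)]
  simp [Real.norm_eq_abs, sq_abs]

lemma Mmul_special {n : ℕ} (c : ℝ) (v : Fin n → ℝ) (J : Matrix (Fin n) (Fin (n + 1)) ℝ)
    (hJ : ∀ i j, J i j = if j = Fin.last n then v i
      else if j = (i.castSucc : Fin (n + 1)) then c else 0)
    (u : Fin (n + 1) → ℝ) :
    (J.transpose * J).mulVec u =
      Fin.snoc (fun i0 : Fin n => c * (c * u i0.castSucc + v i0 * u (Fin.last n)))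
        (∑ i, v i * (c * u i.castSucc + v i * u (Fin.last n))) := by
  have hJu : J.mulVec u = fun i => c * u i.castSucc + v i * u (Fin.last n) := by
    funext i
    simp only [Matrix.mulVec, dotProduct, hJ]
    rw [Fin.sum_univ_castSucc]
    simp [(Fin.castSucc_lt_last _).ne, Fin.castSucc_inj, Finset.sum_ite_eq',
      mul_comm]
  rw [← Matrix.mulVec_mulVec, hJu]
  funext j
  refine Fin.lastCases ?_ ?_ j
  · simp [Matrix.mulVec, dotProduct, Matrix.transpose_apply, hJ]
  · intro i0
    simp [Matrix.mulVec, dotProduct, Matrix.transpose_apply, hJ,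
      (Fin.castSucc_lt_last _).ne, Fin.castSucc_inj, Finset.sum_ite_eq, eq_comm]

set_option maxHeartbeats 1600000 in
/-- with `ℝ^{n−1}` identified with `{y : y_n = 0}`, `z_n > 0`,
`y = b·x + (1−b)·z` with `x_n = 0`, `0 < b ≤ 1` (so `y ∈ ζ(z;τ)` and `x = h_{z,τ}(y)`),
the Jacobian matrix `J = Dh_{z,τ}(y)` (given by the paper's formula) satisfies:
`JᵀJ` has largest eigenvalue `λ² = ‖z−y‖²·z_n²/(z_n−y_n)^4`, and
`λ = ‖z−x‖/(z_n−y_n) ≥ z_n/(z_n−y_n)`. -/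
theorem stmt_10 {n : ℕ} (hn : 1 ≤ n)
    (z y x : EuclideanSpace ℝ (Fin (n + 1)))
    (hz : 0 < z (Fin.last n)) (hx : x (Fin.last n) = 0)
    (b : ℝ) (hb0 : 0 < b) (hb1 : b ≤ 1) (hy : y = b • x + (1 - b) • z) :
    let zn : ℝ := z (Fin.last n)
    let yn : ℝ := y (Fin.last n)
    let J : Matrix (Fin n) (Fin (n + 1)) ℝ := fun i j =>
      if j = Fin.last n then zn / (zn - yn) ^ 2 * (y i.castSucc - z i.castSucc)
      else if j = (i.castSucc : Fin (n + 1)) then zn / (zn - yn) else 0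
    let M : Matrix (Fin (n + 1)) (Fin (n + 1)) ℝ := J.transpose * J
    let lam : ℝ := ‖z - x‖ / (zn - yn)
    lam ^ 2 = ‖z - y‖ ^ 2 * zn ^ 2 / (zn - yn) ^ 4 ∧
    (∃ u : Fin (n + 1) → ℝ, u ≠ 0 ∧ M.mulVec u = lam ^ 2 • u) ∧
    (∀ (μ : ℝ) (u : Fin (n + 1) → ℝ), u ≠ 0 → M.mulVec u = μ • u → μ ≤ lam ^ 2) ∧
    zn / (zn - yn) ≤ lam := by
  intro zn yn J M lam
  have hb : b ≠ 0 := hb0.ne'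
  have hzn0 : (0 : ℝ) < zn := hz
  have hzn : zn ≠ 0 := hzn0.ne'
  have hyn : yn = (1 - b) * zn := by
    show y (Fin.last n) = _
    rw [hy]
    simp [hx, zn]
  have hs : zn - yn = b * zn := by rw [hyn]; ring
  have hspos : (0 : ℝ) < zn - yn := by rw [hs]; positivity
  have hsne : zn - yn ≠ 0 := hspos.ne'
  have hxyp : ∀ i : Fin n, y i.castSucc = b * x i.castSucc + (1 - b) * z i.castSucc := by
    intro i; rw [hy]; simp
  set W : ℝ := ∑ i : Fin n, (y i.castSucc - z i.castSucc) ^ 2 with hWdef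
  have hWnn : (0 : ℝ) ≤ W := Finset.sum_nonneg fun i _ => sq_nonneg _
  have hzx : ‖z - x‖ ^ 2 = W / b ^ 2 + zn ^ 2 := by
    rw [normsq_eq, Fin.sum_univ_castSucc]
    have hlast : ((z - x) (Fin.last n)) ^ 2 = zn ^ 2 := by
      simp [hx, zn]
    rw [hlast]
    congr 1
    rw [hWdef, Finset.sum_div]
    refine Finset.sum_congr rfl fun i _ => ?_
    have hw : y i.castSucc - z i.castSucc = b * (x i.castSucc - z i.castSucc) := by
      have h := hxyp i; linarith
    have hzx2 : (z - x) i.castSucc = z i.castSucc - x i.castSucc := by simp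
    rw [hzx2, hw]
    field_simp
    ring
  have hzy : ‖z - y‖ ^ 2 = W + (zn - yn) ^ 2 := by
    rw [normsq_eq, Fin.sum_univ_castSucc]
    have hlast : ((z - y) (Fin.last n)) ^ 2 = (zn - yn) ^ 2 := by simp [zn, yn]
    rw [hlast]
    congr 1
    refine Finset.sum_congr rfl fun i _ => ?_
    have : (z - y) i.castSucc = z i.castSucc - y i.castSucc := by simp
    rw [this]; ring
  have hlam2' : lam ^ 2 = ‖z - x‖ ^ 2 / (zn - yn) ^ 2 := by
    show (‖z - x‖ / (zn - yn)) ^ 2 = _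
    rw [div_pow]
  set c : ℝ := zn / (zn - yn) with hcdef
  set v : Fin n → ℝ := fun i => zn / (zn - yn) ^ 2 * (y i.castSucc - z i.castSucc) with hvdef
  set P : ℝ := ∑ i, v i ^ 2 with hPdef
  have hPnn : (0 : ℝ) ≤ P := Finset.sum_nonneg fun i _ => sq_nonneg _
  have hPW : P = zn ^ 2 / (zn - yn) ^ 4 * W := by
    rw [hPdef, hWdef, Finset.mul_sum]
    refine Finset.sum_congr rfl fun i _ => ?_
    rw [hvdef]
    field_simp
  have hlamP : lam ^ 2 = c ^ 2 + P := by
    rw [hlam2', hzx, hPW, hcdef, hs]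
    field_simp
    ring
  have hM : ∀ u : Fin (n + 1) → ℝ, M.mulVec u =
      Fin.snoc (fun i0 : Fin n => c * (c * u i0.castSucc + v i0 * u (Fin.last n)))
        (∑ i, v i * (c * u i.castSucc + v i * u (Fin.last n))) := by
    intro u
    exact Mmul_special c v J (fun i j => rfl) u
  refine ⟨?_, ?_, ?_, ?_⟩
  · -- lam^2 = ‖z-y‖^2 * zn^2 / (zn-yn)^4
    rw [hlam2', hzx, hzy, hs]
    field_simp
  · -- existence of top eigenvector
    by_cases hP0 : P = 0
    · have hv0 : ∀ i : Fin n, v i = 0 := by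
        intro i
        have := (Finset.sum_eq_zero_iff_of_nonneg (fun i _ => sq_nonneg (v i))).1 hP0.symm.symm
        have h2 := this i (Finset.mem_univ i)
        exact pow_eq_zero_iff (n := 2) (by norm_num) |>.1 h2
      have hi0 : 0 < n := hn
      refine ⟨fun j => if j = (⟨0, hi0⟩ : Fin n).castSucc then 1 else 0, ?_, ?_⟩
      · intro h
        have := congrFun h (⟨0, hi0⟩ : Fin n).castSucc
        simp at this
      · rw [hM]
        funext j
        refine Fin.lastCases ?_ ?_ j
        · simp [Fin.snoc_last, hv0, (Fin.castSucc_lt_last _).ne', hi0.ne']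
        · intro i
          simp only [Fin.snoc_castSucc, hv0, Pi.smul_apply, smul_eq_mul]
          rw [hlamP, hP0]
          have hne : (Fin.last n : Fin (n+1)) ≠ (⟨0, hi0⟩ : Fin n).castSucc :=
            (Fin.castSucc_lt_last _).ne'
          simp [hne]
          ring
    · have hPpos : 0 < P := lt_of_le_of_ne hPnn (Ne.symm hP0)
      refine ⟨Fin.snoc (fun i => c * v i) P, ?_, ?_⟩
      · intro h
        have := congrFun h (Fin.last n)
        rw [Fin.snoc_last] at this
        exact hP0 (by simpa using this)
      · rw [hM]
        funext j
        refine Fin.lastCases ?_ ?_ j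
        · simp only [Fin.snoc_last, Fin.snoc_castSucc, Pi.smul_apply, smul_eq_mul]
          rw [hlamP]
          have : ∀ i : Fin n, v i * (c * (c * v i) + v i * P) = (c ^ 2 + P) * v i ^ 2 := by
            intro i; ring
          rw [Finset.sum_congr rfl (fun i _ => this i), ← Finset.mul_sum, ← hPdef]
        · intro i
          simp only [Fin.snoc_last, Fin.snoc_castSucc, Pi.smul_apply, smul_eq_mul]
          rw [hlamP]
          ring
  · -- maximality
    intro μ u hu hMu
    set un : ℝ := u (Fin.last n) with hundef
    set S : ℝ := ∑ i : Fin n, u i.castSucc ^ 2 with hSdef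
    set D : ℝ := ∑ i : Fin n, v i * u i.castSucc with hDdef
    have hSnn : (0 : ℝ) ≤ S := Finset.sum_nonneg fun i _ => sq_nonneg _
    have e1 : ∑ j, u j * M.mulVec u j = c ^ 2 * S + 2 * c * un * D + P * un ^ 2 := by
      rw [hM u, Fin.sum_univ_castSucc]
      simp only [Fin.snoc_castSucc, Fin.snoc_last]
      have h1 : ∀ i : Fin n, u i.castSucc * (c * (c * u i.castSucc + v i * un)) =
          c ^ 2 * u i.castSucc ^ 2 + (c * un) * (v i * u i.castSucc) := by intro i; ring
      have h2 : ∀ i : Fin n, v i * (c * u i.castSucc + v i * un) =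
          c * (v i * u i.castSucc) + un * v i ^ 2 := by intro i; ring
      rw [Finset.sum_congr rfl (fun i _ => h1 i), Finset.sum_add_distrib,
        ← Finset.mul_sum, ← Finset.mul_sum,
        Finset.sum_congr rfl (fun i _ => h2 i), Finset.sum_add_distrib,
        ← Finset.mul_sum, ← Finset.mul_sum, ← hSdef, ← hDdef, ← hPdef]
      ring
    have e2 : ∑ j, u j * M.mulVec u j = μ * (S + un ^ 2) := by
      rw [hMu]
      have : ∀ j, u j * (μ • u) j = μ * u j ^ 2 := by
        intro j; simp [smul_eq_mul]; ring
      rw [Finset.sum_congr rfl (fun j _ => this j), ← Finset.mul_sum,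
        Fin.sum_univ_castSucc, ← hSdef]
    have hCS : D ^ 2 ≤ P * S := by
      rw [hDdef, hPdef, hSdef]
      exact Finset.sum_mul_sq_le_sq_mul_sq Finset.univ v (fun i => u i.castSucc)
    have hpos : 0 < S + un ^ 2 := by
      obtain ⟨j, hj⟩ := Function.ne_iff.1 hu
      have hj2 : (0 : ℝ) < u j ^ 2 := lt_of_le_of_ne (sq_nonneg _) (Ne.symm (pow_ne_zero 2 hj))
      have : u j ^ 2 ≤ ∑ j', u j' ^ 2 :=
        Finset.single_le_sum (fun j' _ => sq_nonneg (u j')) (Finset.mem_univ j)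
      rw [Fin.sum_univ_castSucc, ← hSdef] at this
      linarith
    rw [hlamP]
    have key : μ * (S + un ^ 2) = c ^ 2 * S + 2 * c * un * D + P * un ^ 2 := by
      rw [← e2, e1]
    nlinarith [sq_nonneg (c * un - D), key, hCS, hpos]
  · -- zn/(zn-yn) ≤ lam
    have hlamnn : 0 ≤ lam := div_nonneg (norm_nonneg (z - x)) hspos.le
    have hcpos : 0 < c := div_pos hzn0 hspos
    have : c ≤ lam := by nlinarith [hlamP, hPnn]
    exact this
end

section
/- Let U ⊂ ℝ^k be open and h : U → ℝ^m continuously differentiable. For x ∈ U let λ(x) ≥ 0 be the square root of the largest eigenvalue of Dh(x)^T Dh(x). Let a ≥ 0 and let A ⊂ U be Borel with ℋ^a(A) < ∞. Then ℋ^a(h(A)) ≤ ∫_A λ(x)^a dℋ^a(x). -/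
/-!
Around every point where `‖Dh‖ < L` the map `h` is `L`-Lipschitz, so `ℋ^a(h(t)) ≤ L^a ℋ^a(t)`
for every `t ⊆ A` on which `‖Dh‖ < L` (cover `t` by countably many such neighbourhoods and
make them disjoint). Slicing `A` along the level sets `{nε ≤ ‖Dh‖ < (n+1)ε}` and summing gives
`ℋ^a(h(A)) ≤ ∫_A (‖Dh‖ + ε)^a`. On the part of `A` where `‖Dh‖ ≤ N`, which has finite measure,
dominated convergence lets `ε → 0`; continuity from below then lets `N → ∞`.
-/

open MeasureTheory Set Filter Topology Function
open scoped NNReal ENNReal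

section ImageMeasure

variable {X Y : Type*} [MeasurableSpace X] [MeasurableSpace Y] {μ : Measure X} {ν : Measure Y}
  {f : X → Y} {s : Set X}

theorem measure_image_le_setLIntegral_of_cover {c : ℕ → Set X} (hc : ∀ n, MeasurableSet (c n))
    (hcd : Pairwise (Disjoint on c)) (hsc : s ⊆ ⋃ n, c n) {φ : X → ℝ≥0∞}
    (hφ : ∀ n, ν (f '' (s ∩ c n)) ≤ ∫⁻ x in s ∩ c n, φ x ∂μ) :
    ν (f '' s) ≤ ∫⁻ x in s, φ x ∂μ :=
  calc ν (f '' s) = ν (⋃ n, f '' (s ∩ c n)) := by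
        rw [← image_iUnion, ← inter_iUnion, inter_eq_left.2 hsc]
    _ ≤ ∑' n, ν (f '' (s ∩ c n)) := measure_iUnion_le _
    _ ≤ ∑' n, ∫⁻ x in c n, φ x ∂μ.restrict s := by
        simpa only [Measure.restrict_restrict (hc _), inter_comm] using ENNReal.tsum_le_tsum hφ
    _ = ∫⁻ x in s, φ x ∂μ := by
        rw [← lintegral_iUnion hc hcd, Measure.restrict_restrict (MeasurableSet.iUnion hc),
          inter_eq_right.2 hsc]

variable {g : X → ℝ≥0} {a : ℝ}

theorem measure_image_le_setLIntegral_add_rpow (hg : Measurable g) (ha : 0 ≤ a)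
    (hbound : ∀ t ⊆ s, ∀ L : ℝ≥0, (∀ x ∈ t, g x < L) → ν (f '' t) ≤ L ^ a * μ t)
    {ε : ℝ≥0} (hε : 0 < ε) :
    ν (f '' s) ≤ ∫⁻ x in s, ((g x : ℝ≥0∞) + ε) ^ a ∂μ := by
  set F : X → ℕ := fun x => ⌊g x / ε⌋₊
  have hF : Measurable F := (hg.div_const ε).nat_floor
  refine measure_image_le_setLIntegral_of_cover (c := fun n => F ⁻¹' {n})
    (fun n => hF (measurableSet_singleton n)) (pairwise_disjoint_fiber F)
    (fun x _ => mem_iUnion.2 ⟨F x, rfl⟩) fun n => ?_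
  have hlt : ∀ x ∈ s ∩ F ⁻¹' {n}, g x < (n + 1) * ε := fun x hx => by
    rw [← hx.2]
    exact (div_lt_iff₀ hε).1 (Nat.lt_floor_add_one _)
  have hle : ∀ x ∈ s ∩ F ⁻¹' {n}, ((n + 1) * ε : ℝ≥0) ≤ (g x : ℝ≥0∞) + ε := fun x hx => by
    have : (n : ℝ≥0) * ε ≤ g x := by
      rw [← hx.2]
      exact (le_div_iff₀ hε).1 (Nat.floor_le bot_le)
    rw [add_mul, one_mul]
    push_cast
    gcongr
    exact_mod_cast this
  calc ν (f '' (s ∩ F ⁻¹' {n})) ≤ (((n + 1) * ε : ℝ≥0) : ℝ≥0∞) ^ a * μ (s ∩ F ⁻¹' {n}) :=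
        hbound _ inter_subset_left _ hlt
    _ = ∫⁻ _ in s ∩ F ⁻¹' {n}, (((n + 1) * ε : ℝ≥0) : ℝ≥0∞) ^ a ∂μ :=
        (setLIntegral_const _ _).symm
    _ ≤ ∫⁻ x in s ∩ F ⁻¹' {n}, ((g x : ℝ≥0∞) + ε) ^ a ∂μ :=
        setLIntegral_mono (by fun_prop) fun x hx => ENNReal.rpow_le_rpow (hle x hx) ha

theorem le_setLIntegral_rpow_of_forall_le_add (hg : Measurable g) (ha : 0 ≤ a) (hμs : μ s ≠ ∞)
    {N : ℝ≥0} (hgN : ∀ x ∈ s, g x ≤ N) {c : ℝ≥0∞}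
    (hc : ∀ ε : ℝ≥0, 0 < ε → c ≤ ∫⁻ x in s, ((g x : ℝ≥0∞) + ε) ^ a ∂μ) :
    c ≤ ∫⁻ x in s, (g x : ℝ≥0∞) ^ a ∂μ := by
  have hfin : ∫⁻ x in s, ((g x : ℝ≥0∞) + 1) ^ a ∂μ ≠ ∞ := by
    refine ne_top_of_le_ne_top ?_ (setLIntegral_mono measurable_const fun x hx =>
      ENNReal.rpow_le_rpow (add_le_add_left (ENNReal.coe_le_coe.2 (hgN x hx)) 1) ha)
    rw [setLIntegral_const]
    exact ENNReal.mul_ne_top (ENNReal.rpow_ne_top_of_nonneg ha (by simp)) hμs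
  have hlim : Tendsto (fun ε : ℝ≥0 => ∫⁻ x in s, ((g x : ℝ≥0∞) + ε) ^ a ∂μ) (𝓝[>] 0)
      (𝓝 (∫⁻ x in s, (g x : ℝ≥0∞) ^ a ∂μ)) := by
    refine tendsto_lintegral_filter_of_dominated_convergence (fun x => ((g x : ℝ≥0∞) + 1) ^ a)
      (Eventually.of_forall fun ε => by fun_prop) ?_ hfin (ae_of_all _ fun x => ?_)
    · filter_upwards [Ioo_mem_nhdsGT one_pos] with ε hε
      exact ae_of_all _ fun x => ENNReal.rpow_le_rpow (by gcongr; exact_mod_cast hε.2.le) ha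
    · have : Continuous fun ε : ℝ≥0 => ((g x : ℝ≥0∞) + ε) ^ a := by fun_prop
      simpa using (this.tendsto 0).mono_left nhdsWithin_le_nhds
  exact ge_of_tendsto hlim (eventually_nhdsWithin_of_forall hc)

theorem measure_image_le_setLIntegral_rpow (hg : Measurable g) (ha : 0 ≤ a) (hμs : μ s ≠ ∞)
    (hbound : ∀ t ⊆ s, ∀ L : ℝ≥0, (∀ x ∈ t, g x < L) → ν (f '' t) ≤ L ^ a * μ t) :
    ν (f '' s) ≤ ∫⁻ x in s, (g x : ℝ≥0∞) ^ a ∂μ := by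
  set S : ℕ → Set X := fun N => s ∩ g ⁻¹' Iic N
  have hS : Monotone S := fun M N hMN =>
    inter_subset_inter_right _ (preimage_mono (Iic_subset_Iic.2 (by exact_mod_cast hMN)))
  have hs : s = ⋃ N, S N := Subset.antisymm
    (fun x hx => mem_iUnion.2 ⟨⌈g x⌉₊, hx, Nat.le_ceil (g x)⟩)
    (iUnion_subset fun _ => inter_subset_left)
  calc ν (f '' s) = ⨆ N, ν (f '' S N) := by
        conv_lhs => rw [hs, image_iUnion]
        exact Monotone.measure_iUnion fun M N hMN => image_mono (hS hMN)
    _ ≤ ∫⁻ x in s, (g x : ℝ≥0∞) ^ a ∂μ := iSup_le fun N =>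
        (le_setLIntegral_rpow_of_forall_le_add hg ha
          (ne_top_of_le_ne_top hμs (measure_mono inter_subset_left)) (fun x hx => hx.2)
          fun _ hε => measure_image_le_setLIntegral_add_rpow hg ha
            (fun t ht => hbound t (ht.trans inter_subset_left)) hε).trans
        (lintegral_mono_set inter_subset_left)

end ImageMeasure

theorem hausdorffMeasure_image_le_of_forall_lipschitzOnWith_nhds {X Y : Type*} [EMetricSpace X]
    [MeasurableSpace X] [BorelSpace X] [SecondCountableTopology X] [EMetricSpace Y]
    [MeasurableSpace Y] [BorelSpace Y] {f : X → Y} {K : ℝ≥0} {d : ℝ} (hd : 0 ≤ d) {s : Set X}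
    (hf : ∀ x ∈ s, ∃ u ∈ 𝓝 x, LipschitzOnWith K f u) :
    μH[d] (f '' s) ≤ K ^ d * μH[d] s := by
  choose! u hu hfu using hf
  obtain ⟨t, hts, htc, hst⟩ := TopologicalSpace.countable_cover_nhdsWithin
    (f := fun x => interior (u x)) fun x hx => nhdsWithin_le_nhds (interior_mem_nhds.2 (hu x hx))
  rcases s.eq_empty_or_nonempty with rfl | ⟨x₀, hx₀⟩
  · simp
  obtain ⟨e, rfl⟩ := htc.exists_eq_range (by
    obtain ⟨x, hx, -⟩ := mem_iUnion₂.1 (hst hx₀)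
    exact ⟨x, hx⟩)
  rw [← setLIntegral_const]
  refine measure_image_le_setLIntegral_of_cover (c := disjointed fun n => interior (u (e n)))
    (MeasurableSet.disjointed fun n => isOpen_interior.measurableSet) (disjoint_disjointed _)
    (by rw [iUnion_disjointed]; rwa [biUnion_range] at hst) fun n => ?_
  rw [setLIntegral_const]
  exact ((hfu _ (hts (mem_range_self n))).mono ((inter_subset_right.trans
    (disjointed_subset _ n)).trans interior_subset)).hausdorffMeasure_image_le hd

theorem stmt_11_general {k m : ℕ} (U : Set (EuclideanSpace ℝ (Fin k))) (hU : IsOpen U)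
    (h : EuclideanSpace ℝ (Fin k) → EuclideanSpace ℝ (Fin m))
    (hh : ContDiffOn ℝ 1 h U)
    (a : ℝ) (ha : 0 ≤ a) (A : Set (EuclideanSpace ℝ (Fin k)))
    (hAU : A ⊆ U) (hAfin : μH[a] A < ⊤) :
    μH[a] (h '' A) ≤ ∫⁻ x in A, ENNReal.ofReal (‖fderiv ℝ h x‖ ^ a) ∂μH[a] := by
  have hnorm : ∀ x, ENNReal.ofReal (‖fderiv ℝ h x‖ ^ a) = (‖fderiv ℝ h x‖₊ : ℝ≥0∞) ^ a :=
    fun x => by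
      rw [← ENNReal.ofReal_rpow_of_nonneg (norm_nonneg _) ha, ofReal_norm, enorm_eq_nnnorm]
  simp_rw [hnorm]
  exact measure_image_le_setLIntegral_rpow (measurable_fderiv ℝ h).nnnorm ha hAfin.ne
    fun t htA L hL => hausdorffMeasure_image_le_of_forall_lipschitzOnWith_nhds ha fun x hx =>
      (hh.contDiffAt (hU.mem_nhds (hAU (htA hx)))).exists_lipschitzOnWith_of_nnnorm_lt L (hL x hx)

/-- for `U ⊂ ℝ^k` open, `h : U → ℝ^m` continuously differentiable,
`λ(x) = ‖Dh(x)‖` the square root of the largest eigenvalue of `Dh(x)ᵀDh(x)`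
(i.e. the operator norm of the derivative), `a ≥ 0`, and `A ⊆ U` Borel with
`ℋ^a(A) < ∞`:  `ℋ^a(h(A)) ≤ ∫_A λ(x)^a dℋ^a(x)`. -/
theorem stmt_11 {k m : ℕ} (U : Set (EuclideanSpace ℝ (Fin k))) (hU : IsOpen U)
    (h : EuclideanSpace ℝ (Fin k) → EuclideanSpace ℝ (Fin m))
    (hh : ContDiffOn ℝ 1 h U)
    (a : ℝ) (ha : 0 ≤ a) (A : Set (EuclideanSpace ℝ (Fin k)))
    (hAU : A ⊆ U) (hA : MeasurableSet A) (hAfin : μH[a] A < ⊤) :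
    μH[a] (h '' A) ≤ ∫⁻ x in A, ENNReal.ofReal (‖fderiv ℝ h x‖ ^ a) ∂μH[a] :=
  stmt_11_general U hU h hh a ha A hAU hAfin
end

section
/- Let P be a finite simplicial complex in ℝ^N. Then the barycentric coordinate map β : |P| → ℝ^{P^{(0)}}, sending x to its vector of barycentric coordinates (β_v(x))_{v ∈ P^{(0)}}, is Lipschitz with respect to the Euclidean metrics. -/
/-! Write `βx - βy = p - q` with `p, q ≥ 0` its positive and negative parts. They have disjoint
supports and equal mass `T`, `p` lives on the face carrying `x`, `q` on the face carrying `y`,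
and `∑ p u • u - ∑ q u • u = x - y`. So `p / T` and `q / T` are barycentric coordinates of two
points of `|K|`; as faces meet in common faces, barycentric coordinates are unique, so disjointly
supported coordinate vectors have different barycenters. Since `K` is finite, such pairs of
coordinate vectors form a compact set, on which the distance of the barycenters is bounded below
by some `m > 0`. Hence `∑ |βx - βy| = 2 T ≤ (2 / m) ‖x - y‖`. -/

open Finset

lemma Real.sqrt_sum_sq_le_sum_abs {ι : Type*} (s : Finset ι) (f : ι → ℝ) :
    √(∑ i ∈ s, f i ^ 2) ≤ ∑ i ∈ s, |f i| := by
  refine Real.sqrt_le_iff.2 ⟨sum_nonneg fun i _ => abs_nonneg (f i), ?_⟩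
  simpa only [sq_abs] using sum_sq_le_sq_sum_of_nonneg fun i _ => abs_nonneg (f i)

lemma IsCompact.exists_pos_forall_le {X : Type*} [TopologicalSpace X] {S : Set X}
    (hS : IsCompact S) {f : X → ℝ} (hf : ContinuousOn f S) (hpos : ∀ x ∈ S, 0 < f x) :
    ∃ m > 0, ∀ x ∈ S, m ≤ f x := by
  rcases S.eq_empty_or_nonempty with rfl | hne
  · exact ⟨1, one_pos, by simp⟩
  · obtain ⟨x₀, hx₀, hmin⟩ := hS.exists_isMinOn hne hf
    exact ⟨f x₀, hpos x₀ hx₀, hmin⟩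

def IsConvexWeightOn {ι : Type*} (s : Finset ι) (w : ι → ℝ) : Prop :=
  (∀ u, u ∉ s → w u = 0) ∧ (∀ u, 0 ≤ w u) ∧ ∑ u ∈ s, w u = 1

section ConvexWeight

variable {ι : Type*}

lemma isCompact_setOf_isConvexWeightOn (s : Finset ι) :
    IsCompact {w : ι → ℝ | IsConvexWeightOn s w} := by
  have hclosed : IsClosed {w : ι → ℝ | IsConvexWeightOn s w} := by
    simp only [IsConvexWeightOn, Set.ofPred_and, Set.ofPred_forall]
    exact (isClosed_iInter fun u => isClosed_iInter fun _ =>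
      isClosed_eq (by fun_prop) (by fun_prop)).inter
      ((isClosed_iInter fun u => isClosed_le (by fun_prop) (by fun_prop)).inter
        (isClosed_eq (by fun_prop) (by fun_prop)))
  refine (isCompact_univ_pi fun _ => isCompact_Icc (a := (0 : ℝ)) (b := 1)).of_isClosed_subset
    hclosed fun w ⟨hw0, hwnn, hw1⟩ u _ => ⟨hwnn u, ?_⟩
  by_cases hu : u ∈ s
  · exact hw1 ▸ single_le_sum (fun v _ => hwnn v) hu
  · exact (hw0 u hu).le.trans zero_le_one

lemma IsConvexWeightOn.posPart_sub_eq_zero {s : Finset ι} {α β : ι → ℝ}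
    (hα : IsConvexWeightOn s α) (hβ : ∀ u, 0 ≤ β u) {u : ι} (hu : u ∉ s) : (α u - β u)⁺ = 0 :=
  posPart_eq_zero.2 (by linarith [hα.1 u hu, hβ u])

lemma IsConvexWeightOn.negPart_sub_eq_zero {t : Finset ι} {α β : ι → ℝ}
    (hβ : IsConvexWeightOn t β) (hα : ∀ u, 0 ≤ α u) {u : ι} (hu : u ∉ t) : (α u - β u)⁻ = 0 :=
  negPart_eq_zero.2 (by linarith [hβ.1 u hu, hα u])

variable {E : Type*} [AddCommGroup E] [Module ℝ E]

lemma exists_isConvexWeightOn_of_mem_convexHull [DecidableEq E] {c : Finset E} {x : E}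
    (hx : x ∈ convexHull ℝ (c : Set E)) :
    ∃ w, IsConvexWeightOn c w ∧ ∑ u ∈ c, w u • u = x := by
  obtain ⟨r, hr0, hr1, hrx⟩ := Finset.mem_convexHull'.1 hx
  refine ⟨fun u => if u ∈ c then r u else 0, ⟨fun u hu => if_neg hu, fun u => ?_, ?_⟩, ?_⟩
  · dsimp only
    split_ifs with hu
    exacts [hr0 u hu, le_rfl]
  · rwa [sum_ite_mem, inter_self]
  · rw [← hrx]
    exact sum_congr rfl fun u hu => by simp only [if_pos hu]

lemma IsConvexWeightOn.eq_of_sum_smul_eq {s c : Finset E}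
    (hs : AffineIndependent ℝ ((↑) : s → E)) (hcs : c ⊆ s) {α r : E → ℝ}
    (hα : IsConvexWeightOn s α) (hr : IsConvexWeightOn c r)
    (h : ∑ u ∈ s, α u • u = ∑ u ∈ c, r u • u) : α = r := by
  have hsum : ∑ u ∈ c, r u = ∑ u ∈ s, r u := sum_subset hcs fun u _ hu => hr.1 u hu
  have hsmul : ∑ u ∈ c, r u • u = ∑ u ∈ s, r u • u :=
    sum_subset hcs fun u _ hu => by rw [hr.1 u hu, zero_smul]
  funext u
  by_cases hu : u ∈ s
  · exact hs.eq_of_sum_eq_sum_subtype (by rw [hα.2.2, ← hsum, hr.2.2]) (by rw [h, hsmul]) u hu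
  · rw [hα.1 u hu, hr.1 u fun h => hu (hcs h)]

end ConvexWeight

namespace Geometry.SimplicialComplex

variable {E : Type*} [NormedAddCommGroup E] [NormedSpace ℝ E] (K : SimplicialComplex ℝ E)

theorem eq_of_sum_smul_eq {s t : Finset E} (hs : s ∈ K.faces) (ht : t ∈ K.faces)
    {α β : E → ℝ} (hα : IsConvexWeightOn s α) (hβ : IsConvexWeightOn t β)
    (h : ∑ u ∈ s, α u • u = ∑ u ∈ t, β u • u) : α = β := by
  classical
  have hmem : ∑ u ∈ s, α u • u ∈ convexHull ℝ ((s ∩ t : Finset E) : Set E) := by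
    rw [coe_inter]
    exact K.inter_subset_convexHull hs ht
      ⟨mem_convexHull'.2 ⟨α, fun u _ => hα.2.1 u, hα.2.2, rfl⟩,
        mem_convexHull'.2 ⟨β, fun u _ => hβ.2.1 u, hβ.2.2, h.symm⟩⟩
  obtain ⟨r, hr, hrx⟩ := exists_isConvexWeightOn_of_mem_convexHull hmem
  rw [hα.eq_of_sum_smul_eq (K.indep hs) inter_subset_left hr hrx.symm,
    hβ.eq_of_sum_smul_eq (K.indep ht) inter_subset_right hr (by rw [hrx, h])]

theorem exists_pos_le_norm_sub_of_disjoint (hfin : K.faces.Finite) :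
    ∃ m > 0, ∀ s ∈ K.faces, ∀ t ∈ K.faces, ∀ α β : E → ℝ,
      IsConvexWeightOn s α → IsConvexWeightOn t β → (∀ u, α u * β u = 0) →
      m ≤ ‖∑ u ∈ s, α u • u - ∑ u ∈ t, β u • u‖ := by
  classical
  set V := hfin.toFinset.biUnion id
  have hsumV : ∀ s ∈ K.faces, ∀ w, IsConvexWeightOn s w →
      ∑ u ∈ V, w u • u = ∑ u ∈ s, w u • u := fun s hs w hw =>
    (sum_subset (subset_biUnion_of_mem id (hfin.mem_toFinset.2 hs))
      fun u _ hu => by rw [hw.1 u hu, zero_smul]).symm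
  set W := ⋃ s ∈ K.faces, {w : E → ℝ | IsConvexWeightOn s w}
  have hW : IsCompact W := hfin.isCompact_biUnion fun s _ => isCompact_setOf_isConvexWeightOn s
  set S := W ×ˢ W ∩ {p | ∀ u, p.1 u * p.2 u = 0}
  have hS : IsCompact S := (hW.prod hW).inter_right <| by
    simp only [Set.ofPred_forall]
    exact isClosed_iInter fun u => isClosed_eq (by fun_prop) (by fun_prop)
  have hpos : ∀ p ∈ S, 0 < ‖∑ u ∈ V, p.1 u • u - ∑ u ∈ V, p.2 u • u‖ := by
    rintro ⟨α, β⟩ ⟨⟨hα, hβ⟩, hαβ : ∀ u, α u * β u = 0⟩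
    obtain ⟨s, hs, hα : IsConvexWeightOn s α⟩ := Set.mem_iUnion₂.1 hα
    obtain ⟨t, ht, hβ : IsConvexWeightOn t β⟩ := Set.mem_iUnion₂.1 hβ
    refine norm_pos_iff.2 fun h => ?_
    rw [sub_eq_zero, hsumV s hs α hα, hsumV t ht β hβ] at h
    have hα0 : ∀ u, α u = 0 := fun u =>
      mul_self_eq_zero.1 (by rw [← K.eq_of_sum_smul_eq hs ht hα hβ h] at hαβ; exact hαβ u)
    simpa [hα0] using hα.2.2
  obtain ⟨m, hm, hmS⟩ := hS.exists_pos_forall_le (by fun_prop) hpos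
  refine ⟨m, hm, fun s hs t ht α β hα hβ hαβ => ?_⟩
  rw [← hsumV s hs α hα, ← hsumV t ht β hβ]
  exact hmS (α, β) ⟨⟨Set.mem_biUnion hs hα, Set.mem_biUnion ht hβ⟩, hαβ⟩

theorem exists_pos_mul_le_norm_sub (hfin : K.faces.Finite) :
    ∃ m > 0, ∀ s ∈ K.faces, ∀ t ∈ K.faces, ∀ p q : E → ℝ,
      (∀ u, u ∉ s → p u = 0) → (∀ u, u ∉ t → q u = 0) → (∀ u, 0 ≤ p u) → (∀ u, 0 ≤ q u) →
      (∀ u, p u * q u = 0) → ∑ u ∈ s, p u = ∑ u ∈ t, q u →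
      m * ∑ u ∈ s, p u ≤ ‖∑ u ∈ s, p u • u - ∑ u ∈ t, q u • u‖ := by
  obtain ⟨m, hm, hmle⟩ := K.exists_pos_le_norm_sub_of_disjoint hfin
  refine ⟨m, hm, fun s hs t ht p q hp hq hp₀ hq₀ hpq hsum => ?_⟩
  have hT₀ : 0 ≤ ∑ u ∈ s, p u := sum_nonneg fun u _ => hp₀ u
  generalize hTdef : ∑ u ∈ s, p u = T at hsum hT₀ ⊢
  rcases hT₀.eq_or_lt with rfl | hT
  · rw [mul_zero]
    exact norm_nonneg _
  have hweight : ∀ (c : Finset E) (w : E → ℝ), (∀ u, u ∉ c → w u = 0) → (∀ u, 0 ≤ w u) →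
      ∑ u ∈ c, w u = T → IsConvexWeightOn c (T⁻¹ • w) := fun c w hw hw₀ hwT =>
    ⟨fun u hu => by simp [hw u hu], fun u => mul_nonneg (inv_nonneg.2 hT.le) (hw₀ u),
      by simp only [Pi.smul_apply, smul_eq_mul, ← mul_sum, hwT, inv_mul_cancel₀ hT.ne']⟩
  have h := hmle s hs t ht _ _ (hweight s p hp hp₀ hTdef) (hweight t q hq hq₀ hsum.symm)
    fun u => by
      rw [Pi.smul_apply, Pi.smul_apply, smul_eq_mul, smul_eq_mul, mul_mul_mul_comm, hpq u, mul_zero]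
  have hscale : ∑ u ∈ s, (T⁻¹ • p) u • u - ∑ u ∈ t, (T⁻¹ • q) u • u
      = T⁻¹ • (∑ u ∈ s, p u • u - ∑ u ∈ t, q u • u) := by
    simp only [Pi.smul_apply, smul_eq_mul, mul_smul, ← smul_sum, smul_sub]
  rwa [hscale, norm_smul, norm_inv, Real.norm_of_nonneg hT.le, inv_mul_eq_div,
    le_div_iff₀ hT] at h

theorem exists_sum_abs_sub_le [DecidableEq E] (hfin : K.faces.Finite) :
    ∃ C, ∀ s ∈ K.faces, ∀ t ∈ K.faces, ∀ α β : E → ℝ,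
      IsConvexWeightOn s α → IsConvexWeightOn t β →
      ∑ u ∈ s ∪ t, |α u - β u| ≤ C * ‖∑ u ∈ s, α u • u - ∑ u ∈ t, β u • u‖ := by
  obtain ⟨m, hm, hmle⟩ := K.exists_pos_mul_le_norm_sub hfin
  refine ⟨2 / m, fun s hs t ht α β hα hβ => ?_⟩
  set p := fun u => (α u - β u)⁺
  set q := fun u => (α u - β u)⁻
  have hp : ∀ u, u ∉ s → p u = 0 := fun _ => hα.posPart_sub_eq_zero hβ.2.1
  have hq : ∀ u, u ∉ t → q u = 0 := fun _ => hβ.negPart_sub_eq_zero hα.2.1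
  have hpq : ∀ u, p u * q u = 0 := fun u => by
    rcases le_total (α u - β u) 0 with h | h
    · simp only [p, posPart_eq_zero.2 h, zero_mul]
    · simp only [q, negPart_eq_zero.2 h, mul_zero]
  have hsub : ∀ u, p u - q u = α u - β u := fun u => posPart_sub_negPart _
  have extend {c : Finset E} (hc : c ⊆ s ∪ t) {w : E → ℝ} (hw : ∀ u, u ∉ c → w u = 0) :
      ∑ u ∈ c, w u = ∑ u ∈ s ∪ t, w u ∧ ∑ u ∈ c, w u • u = ∑ u ∈ s ∪ t, w u • u :=
    ⟨sum_subset hc fun u _ hu => hw u hu,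
      sum_subset hc fun u _ hu => by rw [hw u hu, zero_smul]⟩
  have hps := (extend subset_union_left hp).1
  have hqt := (extend subset_union_right hq).1
  have hsum : ∑ u ∈ s, p u = ∑ u ∈ t, q u := by
    rw [hps, hqt, ← sub_eq_zero, ← sum_sub_distrib, sum_congr rfl fun u _ => hsub u,
      sum_sub_distrib, ← (extend subset_union_left hα.1).1,
      ← (extend subset_union_right hβ.1).1, hα.2.2, hβ.2.2, sub_self]
  have hbary : ∑ u ∈ s, p u • u - ∑ u ∈ t, q u • u = ∑ u ∈ s, α u • u - ∑ u ∈ t, β u • u := by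
    rw [(extend subset_union_left hp).2, (extend subset_union_right hq).2,
      (extend subset_union_left hα.1).2, (extend subset_union_right hβ.1).2,
      ← sum_sub_distrib, ← sum_sub_distrib]
    exact sum_congr rfl fun u _ => by rw [← sub_smul, ← sub_smul, hsub]
  have habs : ∑ u ∈ s ∪ t, |α u - β u| = 2 * ∑ u ∈ s, p u := by
    rw [two_mul]
    nth_rewrite 2 [hsum]
    rw [hps, hqt, ← sum_add_distrib]
    exact sum_congr rfl fun u _ => (posPart_add_negPart _).symm
  have hlow := hmle s hs t ht p q hp hq (fun u => posPart_nonneg _) (fun u => negPart_nonneg _)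
    hpq hsum
  rw [habs, ← hbary, div_mul_eq_mul_div, le_div_iff₀ hm]
  linarith

end Geometry.SimplicialComplex

open Classical in
/-- for a finite simplicial complex `P` in `ℝ^N`, the barycentric coordinate
map `β : |P| → ℝ^{P⁽⁰⁾}` is Lipschitz (w.r.t. the Euclidean metrics).  Barycentric
coordinates of `x ∈ |P|` are characterized as the unique weights `βx : E → ℝ`, vanishing
outside (the vertex set of) some face containing `x`, nonnegative, summing to `1` and with
barycenter `x`. -/
theorem stmt_18 {N : ℕ}
    (K : Geometry.SimplicialComplex ℝ (EuclideanSpace ℝ (Fin N)))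
    (hfin : K.faces.Finite) :
    ∃ C : ℝ, ∀ x ∈ K.space, ∀ y ∈ K.space,
      ∀ βx βy : EuclideanSpace ℝ (Fin N) → ℝ,
      (∃ s ∈ K.faces, (∀ u, u ∉ s → βx u = 0) ∧ (∀ u, 0 ≤ βx u) ∧
        (∑ u ∈ s, βx u) = 1 ∧ (∑ u ∈ s, βx u • u) = x) →
      (∃ s ∈ K.faces, (∀ u, u ∉ s → βy u = 0) ∧ (∀ u, 0 ≤ βy u) ∧
        (∑ u ∈ s, βy u) = 1 ∧ (∑ u ∈ s, βy u • u) = y) →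
      Real.sqrt (∑ u ∈ hfin.toFinset.biUnion id, (βx u - βy u) ^ 2) ≤ C * ‖x - y‖ := by
  obtain ⟨C, hC⟩ := K.exists_sum_abs_sub_le hfin
  refine ⟨C, fun x _ y _ βx βy => ?_⟩
  rintro ⟨s, hs, hx₀, hx_nonneg, hx₁, rfl⟩ ⟨t, ht, hy₀, hy_nonneg, hy₁, rfl⟩
  have hface (c) (hc : c ∈ K.faces) : c ⊆ hfin.toFinset.biUnion id :=
    subset_biUnion_of_mem id (hfin.mem_toFinset.2 hc)
  calc √(∑ u ∈ hfin.toFinset.biUnion id, (βx u - βy u) ^ 2)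
      ≤ ∑ u ∈ hfin.toFinset.biUnion id, |βx u - βy u| := Real.sqrt_sum_sq_le_sum_abs _ _
    _ = ∑ u ∈ s ∪ t, |βx u - βy u| := by
      refine (sum_subset (union_subset (hface s hs) (hface t ht)) fun u _ hu => ?_).symm
      rw [hx₀ u fun h => hu (mem_union_left t h), hy₀ u fun h => hu (mem_union_right s h),
        sub_self, abs_zero]
    _ ≤ C * ‖∑ u ∈ s, βx u • u - ∑ u ∈ t, βy u • u‖ :=
      hC s hs t ht βx βy ⟨hx₀, hx_nonneg, hx₁⟩ ⟨hy₀, hy_nonneg, hy₁⟩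
end

section
/- Let P be a finite simplicial complex in ℝ^N. Then there exists K < ∞ such that: whenever ρ, τ ∈ P satisfy ρ ∩ τ ≠ ∅ but neither is a subset of the other, and x ∈ Int ρ, y ∈ Int τ, there exist points x̃, ỹ ∈ Int(ρ ∩ τ) with |x − x̃| + |x̃ − ỹ| + |ỹ − y| ≤ K·|x − y|. -/
/-- The simplicial (relative) interior of the simplex spanned by a finite set `s`
of affinely independent points: combinations with all weights strictly positive. -/
def finsetInterior {E : Type*} [AddCommGroup E] [Module ℝ E] (s : Finset E) : Set E :=
  {x | ∃ w : E → ℝ, (∀ u ∈ s, 0 < w u) ∧ (∑ u ∈ s, w u) = 1 ∧ (∑ u ∈ s, w u • u) = x}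

/-!
Fix faces `ρ, τ` with `σ = ρ ∩ τ` nonempty. A point `x ∈ Int ρ` is `x' + ∑ c_u (u - x')` with
`x' ∈ Int σ`, `c ≥ 0` and `u` running over `ρ \ τ`, so `|x - x'| ≤ ε · diam ρ` where `ε = ∑ c_u`.
Affine independence of `ρ` and `conv ρ ∩ conv τ = conv σ` show that no difference `b - p` with
`b ∈ conv (ρ \ τ)`, `p ∈ conv σ` points from `σ` into `τ`; the cone of such directions is closed
(affine independence of `τ`), so Hahn–Banach gives a functional `ψ` with `ψ ≥ 1` on those
differences and `ψ ≤ 0` on the cone. Since `y - x'` lies in the cone,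
`ε ≤ ψ (x - y) ≤ ‖ψ‖ |x - y|`. The same for `y`, the triangle inequality, and finiteness of the
complex give a uniform `K`.
-/

open Filter Topology Pointwise

section Affine

variable {E : Type*} [AddCommGroup E] [Module ℝ E]

theorem finsetInterior_subset_convexHull (s : Finset E) :
    finsetInterior s ⊆ convexHull ℝ (s : Set E) := by
  rintro x ⟨w, hw, hw1, rfl⟩
  exact Finset.mem_convexHull'.2 ⟨w, fun u hu => (hw u hu).le, hw1, rfl⟩

theorem finsetInterior_nonempty {s : Finset E} (hs : s.Nonempty) : (finsetInterior s).Nonempty :=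
  ⟨_, fun _ => (s.card : ℝ)⁻¹, fun _ _ => by positivity,
    by rw [Finset.sum_const, nsmul_eq_mul, mul_inv_cancel₀ (by exact_mod_cast hs.card_pos.ne')],
    rfl⟩

theorem disjoint_affineSpan_of_affineIndependent {ρ s₁ s₂ : Finset E}
    (hρ : AffineIndependent ℝ ((↑) : ρ → E)) (h₁ : s₁ ⊆ ρ) (h₂ : s₂ ⊆ ρ) (hd : Disjoint s₁ s₂) :
    Disjoint (affineSpan ℝ (s₁ : Set E) : Set E) (affineSpan ℝ (s₂ : Set E)) := by
  have himage : ∀ s ⊆ ρ, ((↑) : ρ → E) '' {u | ↑u ∈ s} = s := fun s hs => by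
    ext x
    simpa using fun hx : x ∈ s => hs hx
  have := hρ.affineSpan_disjoint_of_disjoint (s1 := {u | ↑u ∈ s₁}) (s2 := {u | ↑u ∈ s₂})
    (Set.disjoint_left.2 fun u h₁ h₂ => Finset.disjoint_left.1 hd h₁ h₂)
  rwa [himage s₁ h₁, himage s₂ h₂] at this

variable [DecidableEq E]

/-- The tangent cone of `conv τ` at the relative interior of its face `conv σ`. -/
def inwardCone (τ σ : Finset E) : PointedCone ℝ E where
  carrier := {z | ∃ δ : E → ℝ, (∀ u ∈ τ \ σ, 0 ≤ δ u) ∧ ∑ u ∈ τ, δ u = 0 ∧ ∑ u ∈ τ, δ u • u = z}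
  add_mem' := by
    rintro _ _ ⟨δ, hδ, hδ0, rfl⟩ ⟨δ', hδ', hδ0', rfl⟩
    exact ⟨δ + δ', fun u hu => add_nonneg (hδ u hu) (hδ' u hu),
      by simp [Finset.sum_add_distrib, hδ0, hδ0'], by simp [add_smul, Finset.sum_add_distrib]⟩
  zero_mem' := ⟨0, by simp⟩
  smul_mem' := by
    rintro c _ ⟨δ, hδ, hδ0, rfl⟩
    refine ⟨(c : ℝ) • δ, fun u hu => mul_nonneg c.2 (hδ u hu), ?_, ?_⟩
    · simp [← Finset.mul_sum, hδ0]
    · simp [← Nonneg.coe_smul, Finset.smul_sum, smul_smul]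

theorem sub_mem_inwardCone {τ σ : Finset E} (hστ : σ ⊆ τ) {y p : E}
    (hy : y ∈ convexHull ℝ (τ : Set E)) (hp : p ∈ convexHull ℝ (σ : Set E)) :
    y - p ∈ inwardCone τ σ := by
  obtain ⟨v, hv, hv1, rfl⟩ := Finset.mem_convexHull'.1 hy
  obtain ⟨e, -, he1, rfl⟩ := Finset.mem_convexHull'.1 hp
  have hσ : τ ∩ σ = σ := Finset.inter_eq_right.2 hστ
  refine ⟨fun u => v u - if u ∈ σ then e u else 0, fun u hu => ?_, ?_, ?_⟩
  · obtain ⟨huτ, huσ⟩ := Finset.mem_sdiff.1 hu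
    simpa [huσ] using hv u huτ
  · rw [Finset.sum_sub_distrib, Finset.sum_ite_mem, hσ, hv1, he1, sub_self]
  · simp only [sub_smul, ite_smul, zero_smul, Finset.sum_sub_distrib]
    rw [Finset.sum_ite_mem, hσ]

theorem eventually_add_smul_mem_convexHull {τ σ : Finset E} (hστ : σ ⊆ τ) {p z : E}
    (hp : p ∈ finsetInterior σ) (hz : z ∈ inwardCone τ σ) :
    ∀ᶠ t in 𝓝[≥] (0 : ℝ), p + t • z ∈ convexHull ℝ (τ : Set E) := by
  obtain ⟨π, hπ, hπ1, rfl⟩ := hp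
  obtain ⟨δ, hδ, hδ0, rfl⟩ := hz
  have hσ : τ ∩ σ = σ := Finset.inter_eq_right.2 hστ
  set π' : E → ℝ := fun u => if u ∈ σ then π u else 0
  have hweights : ∀ᶠ t in 𝓝[≥] (0 : ℝ), ∀ u ∈ τ, 0 ≤ π' u + t * δ u := by
    refine (Filter.eventually_all_finset τ).2 fun u hu => ?_
    by_cases huσ : u ∈ σ
    · have hlim : Tendsto (fun t : ℝ => π' u + t * δ u) (𝓝 0) (𝓝 (π u)) :=
        (Continuous.tendsto' (by fun_prop) _ _ (by simp [π', huσ]))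
      exact ((hlim.eventually_const_lt (hπ u huσ)).filter_mono nhdsWithin_le_nhds).mono
        fun _ ht => ht.le
    · filter_upwards [self_mem_nhdsWithin] with t (ht : 0 ≤ t)
      simpa [π', huσ] using mul_nonneg ht (hδ u (Finset.mem_sdiff.2 ⟨hu, huσ⟩))
  filter_upwards [hweights] with t ht
  refine Finset.mem_convexHull'.2 ⟨fun u => π' u + t * δ u, ht, ?_, ?_⟩
  · rw [Finset.sum_add_distrib, ← Finset.mul_sum, Finset.sum_ite_mem, hσ, hπ1, hδ0, mul_zero,
      add_zero]
  · simp only [add_smul, ite_smul, zero_smul, Finset.sum_add_distrib, mul_smul, π',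
      ← Finset.smul_sum]
    rw [Finset.sum_ite_mem, hσ]

/-- If `b - p` pointed from `ρ ∩ τ` into `τ`, a short step in that direction from an interior
point of `ρ ∩ τ` would stay in `conv ρ ∩ conv τ ⊆ conv (ρ ∩ τ)`, putting `b ∈ conv (ρ \ τ)` in the
affine span of `ρ ∩ τ`. -/
theorem sub_notMem_inwardCone {ρ τ : Finset E} (hρ : AffineIndependent ℝ ((↑) : ρ → E))
    (hconv : convexHull ℝ ↑ρ ∩ convexHull ℝ ↑τ ⊆ convexHull ℝ (↑(ρ ∩ τ) : Set E))
    (hne : (ρ ∩ τ).Nonempty) {b p : E} (hb : b ∈ convexHull ℝ (↑(ρ \ τ) : Set E))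
    (hp : p ∈ convexHull ℝ (↑(ρ ∩ τ) : Set E)) :
    b - p ∉ inwardCone τ (ρ ∩ τ) := by
  intro hτ
  obtain ⟨p₀, hp₀⟩ := finsetInterior_nonempty hne
  have hρ' : b - p ∈ inwardCone ρ (ρ ∩ τ) := sub_mem_inwardCone Finset.inter_subset_left
    (convexHull_mono (Finset.coe_subset.2 Finset.sdiff_subset) hb) hp
  obtain ⟨t, ⟨hqρ, hqτ⟩, ht⟩ :=
    ((((eventually_add_smul_mem_convexHull Finset.inter_subset_left hp₀ hρ').and
      (eventually_add_smul_mem_convexHull Finset.inter_subset_right hp₀ hτ)).filter_mono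
        (nhdsWithin_mono _ Set.Ioi_subset_Ici_self)).and self_mem_nhdsWithin).exists
  have hq := hconv ⟨hqρ, hqτ⟩
  set A := affineSpan ℝ (↑(ρ ∩ τ) : Set E)
  have hmem : ∀ {x}, x ∈ convexHull ℝ (↑(ρ ∩ τ) : Set E) → x ∈ A :=
    fun hx => convexHull_subset_affineSpan _ hx
  have hbA : b ∈ A := by
    have hb_eq : b = t⁻¹ • ((p₀ + t • (b - p)) - p₀) +ᵥ p := by
      rw [vadd_eq_add, add_sub_cancel_left, smul_smul, inv_mul_cancel₀ (ne_of_gt ht), one_smul,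
        sub_add_cancel]
    rw [hb_eq]
    exact AffineSubspace.vadd_mem_of_mem_direction
      (A.direction.smul_mem _ (AffineSubspace.vsub_mem_direction (hmem hq)
        (hmem (finsetInterior_subset_convexHull _ hp₀)))) (hmem hp)
  exact Set.disjoint_left.1 (disjoint_affineSpan_of_affineIndependent hρ Finset.sdiff_subset
    Finset.inter_subset_left (Finset.disjoint_sdiff_inter ρ τ))
    (convexHull_subset_affineSpan _ hb) hbA

theorem exists_mem_finsetInterior_sub_eq_sum {ρ σ : Finset E} (hσρ : σ ⊆ ρ) (hσ : σ.Nonempty)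
    {x : E} (hx : x ∈ finsetInterior ρ) :
    ∃ x' ∈ finsetInterior σ, ∃ c : E → ℝ, (∀ u ∈ ρ \ σ, 0 ≤ c u) ∧
      x - x' = ∑ u ∈ ρ \ σ, c u • (u - x') := by
  obtain ⟨w, hw, hw1, rfl⟩ := hx
  set a := ∑ u ∈ σ, w u
  have ha : 0 < a := Finset.sum_pos (fun u hu => hw u (hσρ hu)) hσ
  set x' := a⁻¹ • ∑ u ∈ σ, w u • u
  refine ⟨x', ⟨fun u => a⁻¹ * w u, fun u hu => mul_pos (inv_pos.2 ha) (hw u (hσρ hu)),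
    by rw [← Finset.mul_sum, inv_mul_cancel₀ ha.ne'],
    by simp only [x', Finset.smul_sum, smul_smul]⟩,
    w, fun u hu => (hw u (Finset.mem_sdiff.1 hu).1).le, ?_⟩
  have hsplit : ∑ u ∈ ρ, w u • u = ∑ u ∈ ρ \ σ, w u • u + a • x' := by
    rw [← Finset.sum_sdiff hσρ, smul_inv_smul₀ ha.ne']
  have hrest : ∑ u ∈ ρ \ σ, w u = 1 - a := by
    rw [← hw1, ← Finset.sum_sdiff hσρ, add_sub_cancel_right]
  simp only [smul_sub, Finset.sum_sub_distrib, ← Finset.sum_smul, hrest, hsplit]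
  module

end Affine

section Normed

variable {E : Type*} [NormedAddCommGroup E] [NormedSpace ℝ E] [DecidableEq E]

theorem isClosed_inwardCone [FiniteDimensional ℝ E] {τ : Finset E}
    (hτ : AffineIndependent ℝ ((↑) : τ → E)) (σ : Finset E) :
    IsClosed (inwardCone τ σ : Set E) := by
  -- The second component encodes the constraint `∑ δ = 0`; with it, `L` is injective.
  let L : (τ → ℝ) →ₗ[ℝ] E × ℝ :=
    (Fintype.linearCombination ℝ ((↑) : τ → E)).prod (Fintype.linearCombination ℝ fun _ => 1)
  have hL : ∀ δ, L δ = (∑ u, δ u • (u : E), ∑ u, δ u) := fun δ => by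
    simp [L, Fintype.linearCombination_apply]
  have hker : LinearMap.ker L = ⊥ := by
    refine LinearMap.ker_eq_bot'.2 fun δ hδ => funext fun u => ?_
    rw [hL, Prod.mk_eq_zero] at hδ
    exact hτ.eq_zero_of_sum_eq_zero hδ.2 hδ.1 u (Finset.mem_univ u)
  let S : Set (τ → ℝ) := Set.pi {u | (u : E) ∉ σ} fun _ => Set.Ici 0
  have hS : IsClosed S := isClosed_set_pi fun _ _ => isClosed_Ici
  have hcone : (inwardCone τ σ : Set E) = (fun z => (z, (0 : ℝ))) ⁻¹' (L '' S) := by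
    ext z
    constructor
    · rintro ⟨δ, hδ, hδ0, rfl⟩
      refine ⟨fun u => δ u, fun u hu => hδ u (Finset.mem_sdiff.2 ⟨u.2, hu⟩), ?_⟩
      rw [hL, Finset.sum_coe_sort τ (fun u => δ u • u), Finset.sum_coe_sort τ δ, hδ0]
    · rintro ⟨δ, hδ, hLδ⟩
      rw [hL, Prod.mk.injEq] at hLδ
      refine ⟨fun u => if h : u ∈ τ then δ ⟨u, h⟩ else 0, fun u hu => ?_, ?_, ?_⟩
      · obtain ⟨huτ, huσ⟩ := Finset.mem_sdiff.1 hu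
        simpa [huτ] using hδ ⟨u, huτ⟩ huσ
      · rw [Finset.sum_dite_of_true fun _ h => h]
        exact hLδ.2
      · simp_rw [dite_smul, zero_smul]
        rw [Finset.sum_dite_of_true fun _ h => h]
        exact hLδ.1
  rw [hcone]
  exact ((L.isClosedEmbedding_of_injective hker).isClosedMap S hS).preimage
    (continuous_id.prodMk continuous_const)

theorem exists_dual_separating_inwardCone [FiniteDimensional ℝ E] {ρ τ : Finset E}
    (hρ : AffineIndependent ℝ ((↑) : ρ → E)) (hτ : AffineIndependent ℝ ((↑) : τ → E))
    (hconv : convexHull ℝ ↑ρ ∩ convexHull ℝ ↑τ ⊆ convexHull ℝ (↑(ρ ∩ τ) : Set E))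
    (hne : (ρ ∩ τ).Nonempty) :
    ∃ ψ : E →L[ℝ] ℝ,
      (∀ b ∈ convexHull ℝ (↑(ρ \ τ) : Set E), ∀ p ∈ convexHull ℝ (↑(ρ ∩ τ) : Set E),
        1 ≤ ψ (b - p)) ∧
      ∀ z ∈ inwardCone τ (ρ ∩ τ), ψ z ≤ 0 := by
  set K := convexHull ℝ (↑(ρ \ τ) : Set E) - convexHull ℝ (↑(ρ ∩ τ) : Set E)
  have hKcompact : IsCompact K := by
    rw [show K = _ from (Set.image2_sub ..).symm, ← Set.image_prod]
    exact (((ρ \ τ).finite_toSet.isCompact_convexHull (𝕜 := ℝ)).prod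
      ((ρ ∩ τ).finite_toSet.isCompact_convexHull (𝕜 := ℝ))).image continuous_sub
  have hKconvex : Convex ℝ K := (convex_convexHull ℝ _).sub (convex_convexHull ℝ _)
  have hdisj : Disjoint K (inwardCone τ (ρ ∩ τ) : Set E) := by
    rw [Set.disjoint_left]
    rintro _ ⟨b, hb, p, hp, rfl⟩
    exact sub_notMem_inwardCone hρ hconv hne hb hp
  obtain ⟨f, hfC, hfK⟩ := ProperCone.hyperplane_separation
    ⟨inwardCone τ (ρ ∩ τ), isClosed_inwardCone hτ _⟩ hKconvex hKcompact hdisj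
  obtain ⟨m, hm, hmK⟩ := hKcompact.exists_forall_le' (f := fun k => -f k)
    (by fun_prop) fun k hk => neg_pos.2 (hfK k hk)
  refine ⟨-m⁻¹ • f, fun b hb p hp => ?_, fun z hz => ?_⟩
  · have := hmK _ (Set.sub_mem_sub hb hp)
    change 1 ≤ -m⁻¹ * f (b - p)
    rw [neg_mul, ← mul_neg]
    rwa [le_inv_mul_iff₀ hm, mul_one]
  · simpa using mul_nonneg (inv_nonneg.2 hm.le) (hfC z hz)

theorem exists_mem_finsetInterior_inter_norm_sub_le [FiniteDimensional ℝ E] {ρ τ : Finset E}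
    (hρ : AffineIndependent ℝ ((↑) : ρ → E)) (hτ : AffineIndependent ℝ ((↑) : τ → E))
    (hconv : convexHull ℝ ↑ρ ∩ convexHull ℝ ↑τ ⊆ convexHull ℝ (↑(ρ ∩ τ) : Set E))
    (hne : (ρ ∩ τ).Nonempty) :
    ∃ L : ℝ, ∀ x ∈ finsetInterior ρ, ∀ y ∈ convexHull ℝ (τ : Set E),
      ∃ x' ∈ finsetInterior (ρ ∩ τ), ‖x - x'‖ ≤ L * ‖x - y‖ := by
  obtain ⟨ψ, hψK, hψC⟩ := exists_dual_separating_inwardCone hρ hτ hconv hne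
  set D := Metric.diam (convexHull ℝ (ρ : Set E))
  refine ⟨D * ‖ψ‖, fun x hx y hy => ?_⟩
  obtain ⟨x', hx', c, hc, hxx'⟩ :=
    exists_mem_finsetInterior_sub_eq_sum Finset.inter_subset_left hne hx
  rw [Finset.sdiff_inter_self_left] at hc hxx'
  have hx'σ := finsetInterior_subset_convexHull _ hx'
  have hx'ρ : x' ∈ convexHull ℝ (ρ : Set E) :=
    convexHull_mono (Finset.coe_subset.2 Finset.inter_subset_left) hx'σ
  set ε := ∑ u ∈ ρ \ τ, c u
  have hψx : ε ≤ ψ (x - x') := by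
    rw [hxx', map_sum]
    refine Finset.sum_le_sum fun u hu => ?_
    rw [map_smul, smul_eq_mul]
    exact le_mul_of_one_le_right (hc u hu) (hψK u (subset_convexHull ℝ _ hu) x' hx'σ)
  have hψy : 0 ≤ ψ (x' - y) := by
    rw [← neg_sub, map_neg, neg_nonneg]
    exact hψC _ (sub_mem_inwardCone Finset.inter_subset_right hy hx'σ)
  have hnorm : ‖x - x'‖ ≤ ε * D := by
    rw [hxx', Finset.sum_mul]
    refine (norm_sum_le _ _).trans (Finset.sum_le_sum fun u hu => ?_)
    rw [norm_smul, Real.norm_of_nonneg (hc u hu), ← dist_eq_norm]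
    exact mul_le_mul_of_nonneg_left (Metric.dist_le_diam_of_mem
      (isBounded_convexHull.2 ρ.finite_toSet.isBounded)
      (subset_convexHull ℝ _ (Finset.mem_sdiff.1 hu).1) hx'ρ) (hc u hu)
  refine ⟨x', hx', ?_⟩
  calc ‖x - x'‖ ≤ ε * D := hnorm
    _ ≤ ψ (x - y) * D := by
        rw [← sub_add_sub_cancel x x' y, map_add]
        exact mul_le_mul_of_nonneg_right (by linarith) Metric.diam_nonneg
    _ ≤ ‖ψ‖ * ‖x - y‖ * D :=
        mul_le_mul_of_nonneg_right ((le_abs_self _).trans (ψ.le_opNorm _)) Metric.diam_nonneg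
    _ = D * ‖ψ‖ * ‖x - y‖ := by ring

theorem exists_detour_through_finsetInterior_inter_le [FiniteDimensional ℝ E] {ρ τ : Finset E}
    (hρ : AffineIndependent ℝ ((↑) : ρ → E)) (hτ : AffineIndependent ℝ ((↑) : τ → E))
    (hconv : convexHull ℝ ↑ρ ∩ convexHull ℝ ↑τ ⊆ convexHull ℝ (↑(ρ ∩ τ) : Set E))
    (hne : (ρ ∩ τ).Nonempty) :
    ∃ K : ℝ, ∀ x ∈ finsetInterior ρ, ∀ y ∈ finsetInterior τ,
      ∃ x' ∈ finsetInterior (ρ ∩ τ), ∃ y' ∈ finsetInterior (ρ ∩ τ),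
        ‖x - x'‖ + ‖x' - y'‖ + ‖y' - y‖ ≤ K * ‖x - y‖ := by
  obtain ⟨L₁, hL₁⟩ := exists_mem_finsetInterior_inter_norm_sub_le hρ hτ hconv hne
  obtain ⟨L₂, hL₂⟩ := exists_mem_finsetInterior_inter_norm_sub_le hτ hρ
    (by rw [Set.inter_comm, Finset.inter_comm]; exact hconv) (Finset.inter_comm ρ τ ▸ hne)
  refine ⟨2 * L₁ + 2 * L₂ + 1, fun x hx y hy => ?_⟩
  obtain ⟨x', hx', hxx'⟩ := hL₁ x hx y (finsetInterior_subset_convexHull _ hy)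
  obtain ⟨y', hy', hyy'⟩ := hL₂ y hy x (finsetInterior_subset_convexHull _ hx)
  rw [Finset.inter_comm] at hy'
  refine ⟨x', hx', y', hy', ?_⟩
  have hmid : ‖x' - y'‖ ≤ ‖x - x'‖ + ‖x - y‖ + ‖y - y'‖ := by
    simpa only [dist_eq_norm, norm_sub_rev x'] using dist_triangle4 x' x y y'
  rw [norm_sub_rev y x] at hyy'
  rw [norm_sub_rev y' y]
  linarith

end Normed

open Classical in
/-- for a finite simplicial complex `P` in `ℝ^N` there is `K < ∞` such that
whenever faces `ρ, τ` intersect but neither contains the other, and `x ∈ Int ρ`,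
`y ∈ Int τ`, there are `x̃, ỹ ∈ Int (ρ ∩ τ)` with
`|x − x̃| + |x̃ − ỹ| + |ỹ − y| ≤ K·|x − y|`. -/
theorem stmt_19 {N : ℕ}
    (P : Geometry.SimplicialComplex ℝ (EuclideanSpace ℝ (Fin N)))
    (hfin : P.faces.Finite) :
    ∃ K : ℝ, ∀ ρ ∈ P.faces, ∀ τ ∈ P.faces,
      (ρ ∩ τ).Nonempty → ¬ρ ⊆ τ → ¬τ ⊆ ρ →
      ∀ x ∈ finsetInterior ρ, ∀ y ∈ finsetInterior τ,
        ∃ x' ∈ finsetInterior (ρ ∩ τ), ∃ y' ∈ finsetInterior (ρ ∩ τ),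
          ‖x - x'‖ + ‖x' - y'‖ + ‖y' - y‖ ≤ K * ‖x - y‖ := by
  have hpair : ∀ ρ ∈ P.faces, ∀ τ ∈ P.faces, ∃ K : ℝ, (ρ ∩ τ).Nonempty →
      ∀ x ∈ finsetInterior ρ, ∀ y ∈ finsetInterior τ,
        ∃ x' ∈ finsetInterior (ρ ∩ τ), ∃ y' ∈ finsetInterior (ρ ∩ τ),
          ‖x - x'‖ + ‖x' - y'‖ + ‖y' - y‖ ≤ K * ‖x - y‖ := by
    intro ρ hρ τ hτ
    by_cases hne : (ρ ∩ τ).Nonempty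
    · obtain ⟨K, hK⟩ := exists_detour_through_finsetInterior_inter_le (P.indep hρ) (P.indep hτ)
        (by simpa using P.inter_subset_convexHull hρ hτ) hne
      exact ⟨K, fun _ => hK⟩
    · exact ⟨0, fun h => absurd h hne⟩
  choose! K hK using hpair
  obtain ⟨M, hM⟩ := ((hfin.prod hfin).image fun q => K q.1 q.2).bddAbove
  refine ⟨M, fun ρ hρ τ hτ hne _ _ x hx y hy => ?_⟩
  obtain ⟨x', hx', y', hy', hle⟩ := hK ρ hρ τ hτ hne x hx y hy
  exact ⟨x', hx', y', hy', hle.trans (mul_le_mul_of_nonneg_right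
    (hM ⟨(ρ, τ), ⟨hρ, hτ⟩, rfl⟩) (norm_nonneg _))⟩
end
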